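/- arXiv:1611.02400 — 5 statements merged into one kernel-verified Lean document; each statement's English description precedes it below -/
import Mathlib

section
/- The 3-dimensional hypercube graph Q_3 (on 8 vertices) contains a perfect matching M of size 4 such that every induced matching M' ⊆ M has |M'| ≤ 1. Consequently, the multitasking capacity α of Q_3 satisfies α ≤ 1/4. -/
/-- `M` is a matching in `G`: a set of edges of `G` that are pairwise vertex-disjoint. -/
def IsMatchingSet {V : Type*} (G : SimpleGraph V) (M : Finset (Sym2 V)) : Prop :=
  (↑M ⊆ G.edgeSet) ∧ ∀ e ∈ M, ∀ f ∈ M, e ≠ f → ∀ v : V, v ∈ e → v ∉ f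

/-- `M` is an induced matching in `G`. -/
def IsInducedMatchingSet {V : Type*} (G : SimpleGraph V) (M : Finset (Sym2 V)) : Prop :=
  IsMatchingSet G M ∧
    ∀ e ∈ M, ∀ f ∈ M, e ≠ f → ∀ u v : V, u ∈ e → v ∈ f → ¬ G.Adj u v

/-- The 3-dimensional hypercube `Q₃`: vertices are `{0,1}³`, adjacent iff they differ in
exactly one coordinate. -/
def Q3 : SimpleGraph (Fin 3 → Bool) :=
  SimpleGraph.fromRel fun x y => (Finset.univ.filter fun i => x i ≠ y i).card = 1

/-! In the perfect matching `{000–001, 010–110, 011–111, 100–101}` of `Q₃` any two edges are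
joined by an edge of `Q₃`, so no two of them form an induced matching; an `α`-multitasker must
therefore find an induced matching of size `4α ≤ 1` inside it. -/

def IsMultitasker {V : Type*} (G : SimpleGraph V) (α : ℝ) : Prop :=
  ∀ N, IsMatchingSet G N → ∃ N' ⊆ N, IsInducedMatchingSet G N' ∧ α * N.card ≤ (N'.card : ℝ)

section InducedMatching

variable {V : Type*} {G : SimpleGraph V}

theorem IsInducedMatchingSet.card_le_one_of_subset {M M' : Finset (Sym2 V)}
    (hM : ∀ e ∈ M, ∀ f ∈ M, e ≠ f → ∃ u ∈ e, ∃ v ∈ f, G.Adj u v)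
    (hsub : M' ⊆ M) (hind : IsInducedMatchingSet G M') : M'.card ≤ 1 := by
  by_contra! h
  obtain ⟨e, he, f, hf, hef⟩ := Finset.one_lt_card.mp h
  obtain ⟨u, hu, v, hv, huv⟩ := hM e (hsub he) f (hsub hf) hef
  exact hind.2 e he f hf hef u v hu hv huv

theorem IsMultitasker.le_inv_card {α : ℝ} (hG : IsMultitasker G α) {M : Finset (Sym2 V)}
    (hM : IsMatchingSet G M) (hne : M.Nonempty)
    (hind : ∀ M' ⊆ M, IsInducedMatchingSet G M' → M'.card ≤ 1) :
    α ≤ 1 / M.card := by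
  obtain ⟨M', hsub, hM', hle⟩ := hG M hM
  have hM'_le : (M'.card : ℝ) ≤ 1 := by exact_mod_cast hind M' hsub hM'
  rw [le_div_iff₀ (by exact_mod_cast hne.card_pos)]
  linarith

end InducedMatching

instance : DecidableRel Q3.Adj := fun _ _ => decidable_of_iff' _ (SimpleGraph.fromRel_adj _ _ _)

def q3Matching : Finset (Sym2 (Fin 3 → Bool)) :=
  { s(![false, false, false], ![false, false, true]),
    s(![false, true, false], ![true, true, false]),
    s(![false, true, true], ![true, true, true]),
    s(![true, false, false], ![true, false, true]) }

theorem isMatchingSet_q3Matching : IsMatchingSet Q3 q3Matching := by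
  refine ⟨?_, by decide⟩
  intro e he
  simp only [q3Matching, Finset.coe_insert, Finset.coe_singleton, Set.mem_insert_iff,
    Set.mem_singleton_iff] at he
  rcases he with rfl | rfl | rfl | rfl <;> decide

theorem card_q3Matching : q3Matching.card = 4 := by decide

theorem exists_mem_q3Matching (v : Fin 3 → Bool) : ∃ e ∈ q3Matching, v ∈ e := by
  revert v; decide

theorem q3Matching_pairwise_joined : ∀ e ∈ q3Matching, ∀ f ∈ q3Matching, e ≠ f →
    ∃ u ∈ e, ∃ v ∈ f, Q3.Adj u v := by
  decide

/-- `Q₃` contains a perfect matching `M` of size `4` such that every induced matching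
`M' ⊆ M` has `|M'| ≤ 1`; consequently, if `Q₃` is an `α`-multitasker then `α ≤ 1/4`. -/
theorem stmt4 :
    (∃ M : Finset (Sym2 (Fin 3 → Bool)),
      IsMatchingSet Q3 M ∧ M.card = 4 ∧ (∀ v, ∃ e ∈ M, v ∈ e) ∧
      ∀ M' ⊆ M, IsInducedMatchingSet Q3 M' → M'.card ≤ 1) ∧
    ∀ α : ℝ,
      (∀ N, IsMatchingSet Q3 N →
        ∃ N' ⊆ N, IsInducedMatchingSet Q3 N' ∧ α * N.card ≤ (N'.card : ℝ)) →
      α ≤ 1 / 4 := by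
  have hind : ∀ M' ⊆ q3Matching, IsInducedMatchingSet Q3 M' → M'.card ≤ 1 :=
    fun _ hsub hM' => hM'.card_le_one_of_subset q3Matching_pairwise_joined hsub
  refine ⟨⟨q3Matching, isMatchingSet_q3Matching, card_q3Matching, exists_mem_q3Matching, hind⟩,
    fun α hα => ?_⟩
  simpa [card_q3Matching] using
    IsMultitasker.le_inv_card hα isMatchingSet_q3Matching (Finset.insert_nonempty _ _) hind
end

section
/- Let G be a bipartite graph with parts A, B and let M = {a_1b_1, …, a_kb_k} be a matching with a_i ∈ A, b_i ∈ B. Suppose every vertex of A has degree at most t in G, and suppose every induced subgraph of G with average degree at least 10 contains a vertex of degree at least 1000t. Then M contains an induced matching of size at least k/20. -/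
set_option linter.unusedSectionVars false

section Aux

open Finset

variable {V : Type*} [Fintype V] [DecidableEq V]

/-- endpoints of a `Sym2` as a `Finset`. -/
def sympair (e : Sym2 V) : Finset V :=
  Sym2.lift ⟨fun a b => {a, b}, fun a b => Finset.pair_comm a b⟩ e

lemma mem_sympair {v : V} {e : Sym2 V} : v ∈ sympair e ↔ v ∈ e := by
  induction e using Sym2.ind with
  | _ a b => simp [sympair, Sym2.mem_iff]

/-- vertex set of a set of Sym2's -/
def msupp (M : Finset (Sym2 V)) : Finset V := M.biUnion sympair

lemma mem_msupp {v : V} {M : Finset (Sym2 V)} : v ∈ msupp M ↔ ∃ e ∈ M, v ∈ e := by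
  simp [msupp, mem_biUnion, mem_sympair]

lemma msupp_mono {M N : Finset (Sym2 V)} (h : M ⊆ N) : msupp M ⊆ msupp N := by
  intro v hv
  rw [mem_msupp] at hv ⊢
  obtain ⟨e, he, hve⟩ := hv
  exact ⟨e, h he, hve⟩

lemma card_msupp_le (M : Finset (Sym2 V)) : (msupp M).card ≤ 2 * M.card := by
  calc (msupp M).card ≤ ∑ e ∈ M, (sympair e).card := card_biUnion_le
    _ ≤ ∑ e ∈ M, 2 := by
        refine Finset.sum_le_sum fun e he => ?_
        induction e using Sym2.ind with
        | _ a b => exact (Finset.card_insert_le _ _).trans (by simp)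
    _ = 2 * M.card := by rw [Finset.sum_const, smul_eq_mul, mul_comm]

variable (G : SimpleGraph V) [DecidableRel G.Adj]

/-- degree sum within a set -/
def dsum (S : Finset V) : ℕ := ∑ v ∈ S, (S.filter (G.Adj v ·)).card

lemma dsum_eq (S : Finset V) :
    dsum G S = ∑ v ∈ S, ∑ u ∈ S, (if G.Adj v u then 1 else 0) := by
  unfold dsum
  refine Finset.sum_congr rfl fun v _ => ?_
  rw [Finset.card_filter]

lemma dsum_mono {S T : Finset V} (h : S ⊆ T) : dsum G S ≤ dsum G T := by
  unfold dsum
  calc ∑ v ∈ S, (S.filter (G.Adj v ·)).card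
      ≤ ∑ v ∈ S, (T.filter (G.Adj v ·)).card :=
        Finset.sum_le_sum fun v _ => Finset.card_le_card (Finset.filter_subset_filter _ h)
    _ ≤ ∑ v ∈ T, (T.filter (G.Adj v ·)).card :=
        Finset.sum_le_sum_of_subset h

lemma dsum_erase {S : Finset V} {v : V} (hv : v ∈ S) :
    dsum G (S.erase v) + 2 * (S.filter (G.Adj v ·)).card = dsum G S := by
  classical
  have hS : S = insert v (S.erase v) := (Finset.insert_erase hv).symm
  have hvne : v ∉ S.erase v := Finset.notMem_erase v S
  have key : ∀ u : V, (S.filter (G.Adj u ·)).card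
      = ((S.erase v).filter (G.Adj u ·)).card + (if G.Adj u v then 1 else 0) := by
    intro u
    rw [Finset.card_filter, Finset.card_filter]
    conv_lhs => rw [hS]
    rw [Finset.sum_insert hvne]
    ring
  have hd : ∑ u ∈ S.erase v, (if G.Adj u v then 1 else 0) = (S.filter (G.Adj v ·)).card := by
    rw [Finset.card_filter]
    conv_rhs => rw [hS, Finset.sum_insert hvne]
    have : (if G.Adj v v then 1 else 0) = 0 := by simp [G.irrefl]
    rw [this, zero_add]
    refine Finset.sum_congr rfl fun u hu => ?_
    simp only [G.adj_comm u v]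
  have hs2 : ∑ u ∈ S.erase v, (S.filter (G.Adj u ·)).card
      = dsum G (S.erase v) + (S.filter (G.Adj v ·)).card := by
    rw [dsum]
    calc ∑ u ∈ S.erase v, (S.filter (G.Adj u ·)).card
        = ∑ u ∈ S.erase v, (((S.erase v).filter (G.Adj u ·)).card
            + (if G.Adj u v then 1 else 0)) := Finset.sum_congr rfl fun u _ => key u
      _ = _ := by rw [Finset.sum_add_distrib, hd]
  have h4 := Finset.sum_erase_add S (fun u => (S.filter (G.Adj u ·)).card) hv
  beta_reduce at h4
  have h3 : dsum G S = ∑ u ∈ S, (S.filter (G.Adj u ·)).card := rfl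
  omega

lemma dsum_le (A B : Set V) (hdisj : Disjoint A B)
    (hpart : ∀ u v, G.Adj u v → (u ∈ A ∧ v ∈ B) ∨ (u ∈ B ∧ v ∈ A))
    (t : ℕ) (hdegA : ∀ v ∈ A, G.degree v ≤ t) (S : Finset V) :
    dsum G S ≤ 2 * (t * S.card) := by
  classical
  set b : V → V → ℕ := fun v u => if v ∈ A ∧ G.Adj v u then 1 else 0 with hb
  have hab : ∀ v u, (if G.Adj v u then (1:ℕ) else 0) = b v u + b u v := by
    intro v u
    by_cases h : G.Adj v u
    · rcases hpart v u h with ⟨hvA, huB⟩ | ⟨hvB, huA⟩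
      · have huA : u ∉ A := fun hu => hdisj.ne_of_mem hu huB rfl
        simp [hb, h, hvA, huA, h.symm]
      · have hvA : v ∉ A := fun hv => hdisj.ne_of_mem hv hvB rfl
        simp [hb, h, hvA, huA, h.symm]
    · have h' : ¬ G.Adj u v := fun hh => h hh.symm
      simp [hb, h, h']
  have h1 : dsum G S = ∑ v ∈ S, ∑ u ∈ S, (b v u + b u v) := by
    rw [dsum_eq]
    exact Finset.sum_congr rfl fun v _ => Finset.sum_congr rfl fun u _ => hab v u
  have h2 : dsum G S = 2 * ∑ v ∈ S, ∑ u ∈ S, b v u := by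
    rw [h1]
    have : ∑ v ∈ S, ∑ u ∈ S, (b v u + b u v)
        = (∑ v ∈ S, ∑ u ∈ S, b v u) + (∑ v ∈ S, ∑ u ∈ S, b u v) := by
      rw [← Finset.sum_add_distrib]
      exact Finset.sum_congr rfl fun v _ => Finset.sum_add_distrib
    rw [this, Finset.sum_comm (s := S) (t := S) (f := fun v u => b u v)]
    ring
  rw [h2]
  have h3 : ∀ v ∈ S, ∑ u ∈ S, b v u ≤ t := by
    intro v _
    by_cases hvA : v ∈ A
    · have he : ∑ u ∈ S, b v u = (S.filter (G.Adj v ·)).card := by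
        rw [Finset.card_filter]
        exact Finset.sum_congr rfl fun u _ => by simp [hb, hvA]
      rw [he]
      calc (S.filter (G.Adj v ·)).card ≤ (Finset.univ.filter (G.Adj v ·)).card :=
            Finset.card_le_card (Finset.filter_subset_filter _ (Finset.subset_univ S))
        _ = G.degree v := by rw [← SimpleGraph.neighborFinset_eq_filter]; rfl
        _ ≤ t := hdegA v hvA
    · have he : ∑ u ∈ S, b v u = 0 := Finset.sum_eq_zero fun u _ => by simp [hb, hvA]
      simp [he]
  calc 2 * ∑ v ∈ S, ∑ u ∈ S, b v u ≤ 2 * ∑ v ∈ S, t :=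
        Nat.mul_le_mul_left 2 (Finset.sum_le_sum h3)
    _ = 2 * (t * S.card) := by rw [Finset.sum_const, smul_eq_mul, mul_comm S.card t]

lemma caroWei {α : Type*} [DecidableEq α] (r : α → α → Prop) [DecidableRel r]
    (hsym : ∀ a b, r a b → r b a) (hirr : ∀ a, ¬ r a a) :
    ∀ n (s : Finset α), s.card = n →
    ∃ I ⊆ s, (∀ a ∈ I, ∀ b ∈ I, a ≠ b → ¬ r a b) ∧
      ∑ a ∈ s, (1:ℝ) / (((s.filter (r a ·)).card : ℝ) + 1) ≤ I.card := by
  intro n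
  induction n using Nat.strong_induction_on with
  | _ n ih =>
  intro s hcard
  rcases s.eq_empty_or_nonempty with rfl | hne
  · exact ⟨∅, Finset.Subset.refl _, by simp, by simp⟩
  obtain ⟨v, hvs, hvmin⟩ := s.exists_min_image (fun a => ((s.filter (r a ·)).card : ℕ)) hne
  set N : Finset α := insert v (s.filter (r v ·)) with hN
  have hNs : N ⊆ s := by
    rw [hN, Finset.insert_subset_iff]
    exact ⟨hvs, Finset.filter_subset _ _⟩
  have hvN : v ∈ N := Finset.mem_insert_self _ _
  set s' : Finset α := s \ N with hs'
  have hs'lt : s'.card < n := by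
    have h1 : s' ⊆ s.erase v := by
      intro a ha
      rw [hs', Finset.mem_sdiff] at ha
      exact Finset.mem_erase.2 ⟨fun h => ha.2 (h ▸ hvN), ha.1⟩
    calc s'.card ≤ (s.erase v).card := Finset.card_le_card h1
      _ < s.card := Finset.card_erase_lt_of_mem hvs
      _ = n := hcard
  obtain ⟨I', hI's, hI'ind, hI'cw⟩ := ih s'.card hs'lt s' rfl
  have hvI' : v ∉ I' := fun h => by
    have := hI's h
    rw [hs', Finset.mem_sdiff] at this
    exact this.2 hvN
  refine ⟨insert v I', ?_, ?_, ?_⟩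
  · rw [Finset.insert_subset_iff]
    exact ⟨hvs, hI's.trans (Finset.sdiff_subset)⟩
  · intro a ha b hb hab
    have hnotN : ∀ c ∈ I', ¬ r v c := by
      intro c hc hrc
      have hcs' := hI's hc
      rw [hs', Finset.mem_sdiff] at hcs'
      exact hcs'.2 (Finset.mem_insert_of_mem (Finset.mem_filter.2 ⟨hcs'.1, hrc⟩))
    rcases Finset.mem_insert.1 ha with rfl | ha'
    · rcases Finset.mem_insert.1 hb with rfl | hb'
      · exact absurd rfl hab
      · exact hnotN b hb'
    · rcases Finset.mem_insert.1 hb with rfl | hb'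
      · exact fun hr => hnotN a ha' (hsym _ _ hr)
      · exact hI'ind a ha' b hb' hab
  · have hcardI : ((insert v I').card : ℝ) = (I'.card : ℝ) + 1 := by
      rw [Finset.card_insert_of_notMem hvI']
      push_cast
      ring
    have hsplit : ∑ a ∈ s, (1:ℝ) / (((s.filter (r a ·)).card : ℝ) + 1)
        = ∑ a ∈ s', (1:ℝ) / (((s.filter (r a ·)).card : ℝ) + 1)
          + ∑ a ∈ N, (1:ℝ) / (((s.filter (r a ·)).card : ℝ) + 1) := by
      rw [hs']
      exact (Finset.sum_sdiff hNs).symm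
    have hNcard : (N.card : ℝ) = ((s.filter (r v ·)).card : ℝ) + 1 := by
      rw [hN, Finset.card_insert_of_notMem (fun h => hirr v (Finset.mem_filter.1 h).2)]
      push_cast
      ring
    have hb1 : ∑ a ∈ N, (1:ℝ) / (((s.filter (r a ·)).card : ℝ) + 1) ≤ 1 := by
      have hterm : ∀ a ∈ N, (1:ℝ) / (((s.filter (r a ·)).card : ℝ) + 1)
          ≤ 1 / (((s.filter (r v ·)).card : ℝ) + 1) := by
        intro a ha
        apply one_div_le_one_div_of_le (by positivity)
        have := hvmin a (hNs ha)
        push_cast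
        linarith [(Nat.cast_le (α := ℝ)).2 this]
      calc ∑ a ∈ N, (1:ℝ) / (((s.filter (r a ·)).card : ℝ) + 1)
          ≤ ∑ _a ∈ N, (1:ℝ) / (((s.filter (r v ·)).card : ℝ) + 1) :=
            Finset.sum_le_sum hterm
        _ = (N.card : ℝ) * (1 / (((s.filter (r v ·)).card : ℝ) + 1)) := by
            rw [Finset.sum_const, nsmul_eq_mul]
        _ = 1 := by rw [hNcard]; field_simp
    have hb2 : ∑ a ∈ s', (1:ℝ) / (((s.filter (r a ·)).card : ℝ) + 1)
        ≤ ∑ a ∈ s', (1:ℝ) / (((s'.filter (r a ·)).card : ℝ) + 1) := by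
      refine Finset.sum_le_sum fun a _ => ?_
      apply one_div_le_one_div_of_le (by positivity)
      have : (s'.filter (r a ·)).card ≤ (s.filter (r a ·)).card :=
        Finset.card_le_card (Finset.filter_subset_filter _ (hs' ▸ Finset.sdiff_subset))
      linarith [(Nat.cast_le (α := ℝ)).2 this]
    rw [hcardI, hsplit]
    linarith

lemma turanIndep {α : Type*} [DecidableEq α] (r : α → α → Prop) [DecidableRel r]
    (hsym : ∀ a b, r a b → r b a) (hirr : ∀ a, ¬ r a a) (s : Finset α) :
    ∃ I ⊆ s, (∀ a ∈ I, ∀ b ∈ I, a ≠ b → ¬ r a b) ∧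
      ((s.card : ℝ))^2 ≤ ((∑ a ∈ s, ((s.filter (r a ·)).card : ℝ)) + s.card) * I.card := by
  obtain ⟨I, hIs, hind, hcw⟩ := caroWei r hsym hirr s.card s rfl
  refine ⟨I, hIs, hind, ?_⟩
  rcases s.eq_empty_or_nonempty with rfl | hne
  · simp
  have hpos : (0:ℝ) < (∑ a ∈ s, ((s.filter (r a ·)).card : ℝ)) + s.card := by
    have h1 : (0:ℝ) < (s.card : ℝ) := by
      exact_mod_cast Finset.card_pos.2 hne
    have h2 : (0:ℝ) ≤ ∑ a ∈ s, ((s.filter (r a ·)).card : ℝ) :=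
      Finset.sum_nonneg fun a _ => by positivity
    linarith
  have hsed := Finset.sq_sum_div_le_sum_sq_div s (fun _ => (1:ℝ))
      (g := fun a => ((s.filter (r a ·)).card : ℝ) + 1) (fun a _ => by positivity)
  simp only [one_pow] at hsed
  have hsum1 : ∑ _a ∈ s, (1:ℝ) = (s.card : ℝ) := by simp
  have hsumg : ∑ a ∈ s, (((s.filter (r a ·)).card : ℝ) + 1)
      = (∑ a ∈ s, ((s.filter (r a ·)).card : ℝ)) + s.card := by
    rw [Finset.sum_add_distrib]
    simp
  rw [hsum1, hsumg] at hsed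
  have : ((s.card : ℝ))^2 / ((∑ a ∈ s, ((s.filter (r a ·)).card : ℝ)) + s.card) ≤ I.card :=
    le_trans hsed hcw
  calc ((s.card : ℝ))^2
      = (((s.card : ℝ))^2 / ((∑ a ∈ s, ((s.filter (r a ·)).card : ℝ)) + s.card))
        * ((∑ a ∈ s, ((s.filter (r a ·)).card : ℝ)) + s.card) := by
        field_simp
    _ ≤ (I.card : ℝ) * ((∑ a ∈ s, ((s.filter (r a ·)).card : ℝ)) + s.card) :=
        mul_le_mul_of_nonneg_right this hpos.le
    _ = _ := by ring

/-- two matching edges conflict if some `G`-edge joins them -/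
def conf (e f : Sym2 V) : Prop := e ≠ f ∧ ∃ u v : V, u ∈ e ∧ v ∈ f ∧ G.Adj u v

instance : DecidableRel (conf G) := fun e f => by unfold conf; infer_instance

lemma conf_symm : ∀ e f, conf G e f → conf G f e := by
  rintro e f ⟨hne, u, v, hu, hv, hadj⟩
  exact ⟨hne.symm, v, u, hv, hu, hadj.symm⟩

lemma conf_irrefl : ∀ e, ¬ conf G e e := fun e h => h.1 rfl

def pairsOf (e : Sym2 V) : Finset (V × V) :=
  Sym2.lift ⟨fun a b => ({(a, b), (b, a)} : Finset (V × V)),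
    fun a b => Finset.pair_comm _ _⟩ e

lemma mem_pairsOf {p : V × V} {e : Sym2 V} : p ∈ pairsOf e ↔ s(p.1, p.2) = e := by
  induction e using Sym2.ind with
  | _ a b =>
    simp only [pairsOf, Sym2.lift_mk, Finset.mem_insert, Finset.mem_singleton,
      Sym2.eq_iff, Prod.ext_iff]

lemma card_pairsOf {e : Sym2 V} (he : ¬ e.IsDiag) : (pairsOf e).card = 2 := by
  induction e using Sym2.ind with
  | _ a b =>
    have hab : a ≠ b := by simpa using he
    simp only [pairsOf, Sym2.lift_mk]
    rw [Finset.card_insert_of_notMem (by simp [Prod.ext_iff, hab]), Finset.card_singleton]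

lemma conf_count (M : Finset (Sym2 V)) (hM : IsMatchingSet G M) :
    (∑ e ∈ M, (M.filter (conf G e ·)).card) + 2 * M.card ≤ dsum G (msupp M) := by
  classical
  set S : Finset V := msupp M with hSdef
  set T : Finset (Sym2 V × Sym2 V) := (M ×ˢ M).filter (fun p => conf G p.1 p.2) with hT
  set W : Finset (V × V) := (S ×ˢ S).filter (fun p => G.Adj p.1 p.2) with hW
  set U : Finset (V × V) := W.filter (fun p => ¬ s(p.1, p.2) ∈ M) with hU
  set P : Finset (V × V) := W.filter (fun p => s(p.1, p.2) ∈ M) with hP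
  -- (a) sum of conflict degrees = T.card
  have ha : ∑ e ∈ M, (M.filter (conf G e ·)).card = T.card := by
    rw [hT, Finset.card_filter, Finset.sum_product]
    exact Finset.sum_congr rfl fun e _ => (Finset.card_filter _ _)
  -- (b) W.card = dsum G S
  have hb : W.card = dsum G S := by
    rw [hW, Finset.card_filter, Finset.sum_product, dsum_eq]
  -- (c)
  have hc : P.card + U.card = W.card := by
    rw [hU, hP]
    exact Finset.card_filter_add_card_filter_not
      (p := fun p : V × V => s(p.1, p.2) ∈ M)
  -- (d) T.card ≤ U.card
  have hd : T.card ≤ U.card := by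
    have key : ∀ p : Sym2 V × Sym2 V, p ∈ T →
        ∃ q : V × V, q.1 ∈ p.1 ∧ q.2 ∈ p.2 ∧ G.Adj q.1 q.2 := by
      intro p hp
      rw [hT, Finset.mem_filter] at hp
      obtain ⟨_, _, u, v, hu, hv, hadj⟩ := hp
      exact ⟨(u, v), hu, hv, hadj⟩
    rcases T.eq_empty_or_nonempty with hTe | ⟨p₀, hp₀⟩
    · simp [hTe]
    choose fc hfc1 hfc2 hfc3 using key
    set F : Sym2 V × Sym2 V → V × V :=
      fun p => if h : p ∈ T then fc p h else fc p₀ hp₀ with hF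
    have hmemT : ∀ p, p ∈ T → p.1 ∈ M ∧ p.2 ∈ M ∧ p.1 ≠ p.2 := by
      intro p hp
      rw [hT, Finset.mem_filter, Finset.mem_product] at hp
      exact ⟨hp.1.1, hp.1.2, hp.2.1⟩
    have huniq : ∀ (x : V) (e f : Sym2 V), e ∈ M → f ∈ M → x ∈ e → x ∈ f → e = f := by
      intro x e f he hf hxe hxf
      by_contra hne
      exact hM.2 e he f hf hne x hxe hxf
    apply Finset.card_le_card_of_injOn F
    · intro p hp
      rw [Finset.mem_coe] at hp
      rw [hF]
      simp only [Finset.mem_coe, dif_pos hp]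
      rw [hU, Finset.mem_filter, hW, Finset.mem_filter, Finset.mem_product]
      obtain ⟨h1, h2, h3⟩ := hmemT p hp
      have hq1 : (fc p hp).1 ∈ S := by
        rw [hSdef, mem_msupp]; exact ⟨p.1, h1, hfc1 p hp⟩
      have hq2 : (fc p hp).2 ∈ S := by
        rw [hSdef, mem_msupp]; exact ⟨p.2, h2, hfc2 p hp⟩
      refine ⟨⟨⟨hq1, hq2⟩, hfc3 p hp⟩, ?_⟩
      intro hgM
      have hg1 : (fc p hp).1 ∈ s((fc p hp).1, (fc p hp).2) := Sym2.mem_mk_left _ _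
      have hg2 : (fc p hp).2 ∈ s((fc p hp).1, (fc p hp).2) := Sym2.mem_mk_right _ _
      have e1 : s((fc p hp).1, (fc p hp).2) = p.1 := huniq _ _ _ hgM h1 hg1 (hfc1 p hp)
      have e2 : s((fc p hp).1, (fc p hp).2) = p.2 := huniq _ _ _ hgM h2 hg2 (hfc2 p hp)
      exact h3 (e1 ▸ e2)
    · intro p hp q hq hFpq
      simp only [Finset.mem_coe] at hp hq
      rw [hF] at hFpq
      simp only [dif_pos hp, dif_pos hq] at hFpq
      obtain ⟨hp1, hp2, _⟩ := hmemT p hp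
      obtain ⟨hq1, hq2, _⟩ := hmemT q hq
      have k1 : p.1 = q.1 := by
        apply huniq (fc p hp).1 _ _ hp1 hq1 (hfc1 p hp)
        rw [hFpq]; exact hfc1 q hq
      have k2 : p.2 = q.2 := by
        apply huniq (fc p hp).2 _ _ hp2 hq2 (hfc2 p hp)
        have : (fc p hp).2 = (fc q hq).2 := by rw [hFpq]
        rw [this]; exact hfc2 q hq
      exact Prod.ext k1 k2
  -- (e) 2 * M.card ≤ P.card
  have he : 2 * M.card ≤ P.card := by
    have hsub : M.biUnion pairsOf ⊆ P := by
      intro p hp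
      rw [Finset.mem_biUnion] at hp
      obtain ⟨e, heM, hpe⟩ := hp
      rw [mem_pairsOf] at hpe
      have hedge : s(p.1, p.2) ∈ G.edgeSet := hpe ▸ hM.1 heM
      have hadj : G.Adj p.1 p.2 := (SimpleGraph.mem_edgeSet G).1 hedge
      have h1 : p.1 ∈ S := by
        rw [hSdef, mem_msupp]
        exact ⟨e, heM, hpe ▸ Sym2.mem_mk_left p.1 p.2⟩
      have h2 : p.2 ∈ S := by
        rw [hSdef, mem_msupp]
        exact ⟨e, heM, hpe ▸ Sym2.mem_mk_right p.1 p.2⟩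
      rw [hP, Finset.mem_filter, hW, Finset.mem_filter, Finset.mem_product]
      exact ⟨⟨⟨h1, h2⟩, hadj⟩, hpe ▸ heM⟩
    have hdisj2 : ∀ e ∈ M, ∀ f ∈ M, e ≠ f → Disjoint (pairsOf e) (pairsOf f) := by
      intro e he f hf hef
      rw [Finset.disjoint_left]
      intro p hpe hpf
      rw [mem_pairsOf] at hpe hpf
      exact hef (hpe ▸ hpf ▸ rfl)
    have hcardb : (M.biUnion pairsOf).card = 2 * M.card := by
      rw [Finset.card_biUnion hdisj2]
      rw [Finset.sum_congr rfl fun e he => card_pairsOf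
        (G.not_isDiag_of_mem_edgeSet (hM.1 he))]
      rw [Finset.sum_const, smul_eq_mul, mul_comm]
    calc 2 * M.card = (M.biUnion pairsOf).card := hcardb.symm
      _ ≤ P.card := Finset.card_le_card hsub
  omega

lemma mainLemma (t : ℕ) (ht : 1 ≤ t)
    (hloc : ∀ S : Finset V,
      (10 : ℝ) ≤ (∑ v ∈ S, ((S.filter (G.Adj v ·)).card : ℝ)) / S.card →
      ∃ v ∈ S, 1000 * t ≤ (S.filter (G.Adj v ·)).card) :
    ∀ n (M : Finset (Sym2 V)), M.card = n → IsMatchingSet G M →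
    ∃ M' ⊆ M, IsInducedMatchingSet G M' ∧
      (M.card : ℝ) / 19 - (dsum G (msupp M) : ℝ) / (38000 * t) ≤ M'.card := by
  intro n
  induction n using Nat.strong_induction_on with
  | _ n ih =>
  intro M hcard hM
  have htR : (1:ℝ) ≤ (t:ℝ) := by exact_mod_cast ht
  have hC : (0:ℝ) < 38000 * t := by linarith
  by_cases hex : ∃ v ∈ msupp M, 1000 * t ≤ ((msupp M).filter (G.Adj v ·)).card
  · -- remove the heavy pair
    obtain ⟨v, hvS, hvdeg⟩ := hex
    obtain ⟨e, heM, hve⟩ := mem_msupp.1 hvS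
    set M₂ : Finset (Sym2 V) := M.erase e with hM₂def
    have hM₂M : M₂ ⊆ M := Finset.erase_subset _ _
    have hM₂ : IsMatchingSet G M₂ :=
      ⟨fun x hx => hM.1 (hM₂M hx),
       fun a ha b hb hab => hM.2 a (hM₂M ha) b (hM₂M hb) hab⟩
    have hcard₂ : M₂.card = M.card - 1 := Finset.card_erase_of_mem heM
    have hMpos : 1 ≤ M.card := Finset.card_pos.2 ⟨e, heM⟩
    have hlt : M₂.card < n := by omega
    obtain ⟨M', hM'sub, hM'ind, hM'card⟩ := ih M₂.card hlt M₂ rfl hM₂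
    refine ⟨M', hM'sub.trans hM₂M, hM'ind, ?_⟩
    -- degree sum decrease
    have hvnot : v ∉ msupp M₂ := by
      intro hv
      obtain ⟨f, hfM₂, hvf⟩ := mem_msupp.1 hv
      have hfe : f ≠ e := Finset.ne_of_mem_erase hfM₂
      exact hM.2 e heM f (hM₂M hfM₂) (Ne.symm hfe) v hve hvf
    have hsub : msupp M₂ ⊆ (msupp M).erase v :=
      Finset.subset_erase.2 ⟨msupp_mono hM₂M, hvnot⟩
    have hDe := dsum_erase G hvS
    have hD₂ : dsum G (msupp M₂) + 2000 * t ≤ dsum G (msupp M) := by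
      have h1 : dsum G (msupp M₂) ≤ dsum G ((msupp M).erase v) := dsum_mono G hsub
      omega
    -- arithmetic
    have hD₂R : (dsum G (msupp M₂) : ℝ) + 2000 * t ≤ (dsum G (msupp M) : ℝ) := by
      exact_mod_cast hD₂
    have hcardR : (M₂.card : ℝ) = (M.card : ℝ) - 1 := by
      rw [hcard₂]
      have : (1:ℕ) ≤ M.card := hMpos
      push_cast [this]
      ring
    have h5 : ((dsum G (msupp M₂) : ℝ) + 2000 * t) / (38000 * t)
        ≤ (dsum G (msupp M) : ℝ) / (38000 * t) :=
      div_le_div_of_nonneg_right hD₂R hC.le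
    have h6 : ((dsum G (msupp M₂) : ℝ) + 2000 * t) / (38000 * t)
        = (dsum G (msupp M₂) : ℝ) / (38000 * t) + 1 / 19 := by
      field_simp
      ring
    rw [h6] at h5
    rw [hcardR] at hM'card
    have : (M.card : ℝ) / 19 - (dsum G (msupp M) : ℝ) / (38000 * t)
        ≤ ((M.card : ℝ) - 1) / 19 - (dsum G (msupp M₂) : ℝ) / (38000 * t) := by
      have : ((M.card : ℝ) - 1) / 19 = (M.card : ℝ) / 19 - 1 / 19 := by ring
      linarith
    linarith
  · -- Turán case
    rcases M.eq_empty_or_nonempty with rfl | hMne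
    · refine ⟨∅, Finset.Subset.refl _, ⟨⟨by simp, by simp⟩, by simp⟩, ?_⟩
      have : (dsum G (msupp (∅ : Finset (Sym2 V))) : ℝ) ≥ 0 := by positivity
      simp only [Finset.card_empty, Nat.cast_zero]
      rw [zero_div]
      have hd0 : (0:ℝ) ≤ (dsum G (msupp (∅ : Finset (Sym2 V))) : ℝ) / (38000 * t) :=
        div_nonneg (by positivity) hC.le
      linarith
    obtain ⟨e₀, he₀⟩ := hMne
    have hkpos : 1 ≤ M.card := Finset.card_pos.2 ⟨e₀, he₀⟩
    have hkR : (1:ℝ) ≤ (M.card : ℝ) := by exact_mod_cast hkpos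
    have hSne : (msupp M).Nonempty := ⟨e₀.out.1, mem_msupp.2 ⟨e₀, he₀, Sym2.out_fst_mem e₀⟩⟩
    have hSpos : (0:ℝ) < ((msupp M).card : ℝ) := by
      exact_mod_cast Finset.card_pos.2 hSne
    -- average degree < 10
    have hDlt : (dsum G (msupp M) : ℝ) < 10 * ((msupp M).card : ℝ) := by
      by_contra hcon
      push_neg at hcon
      have h10 : (10 : ℝ) ≤ (∑ v ∈ msupp M, (((msupp M).filter (G.Adj v ·)).card : ℝ))
          / ((msupp M).card : ℝ) := by
        have hsum : ∑ v ∈ msupp M, (((msupp M).filter (G.Adj v ·)).card : ℝ)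
            = (dsum G (msupp M) : ℝ) := by
          rw [dsum]
          push_cast
          rfl
        rw [hsum, le_div_iff₀ hSpos]
        linarith
      exact hex (hloc (msupp M) h10)
    have hScard : ((msupp M).card : ℝ) ≤ 2 * (M.card : ℝ) := by
      exact_mod_cast card_msupp_le M
    -- conflict count
    have hcc := conf_count G M hM
    have hccR : (∑ e ∈ M, ((M.filter (conf G e ·)).card : ℝ)) + 2 * (M.card : ℝ)
        ≤ (dsum G (msupp M) : ℝ) := by
      exact_mod_cast hcc
    obtain ⟨I, hIM, hIind, hIcard⟩ := turanIndep (conf G) (conf_symm G) (conf_irrefl G) M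
    refine ⟨I, hIM, ?_, ?_⟩
    · refine ⟨⟨fun x hx => hM.1 (hIM hx),
        fun a ha b hb hab => hM.2 a (hIM ha) b (hIM hb) hab⟩, ?_⟩
      intro a ha b hb hab u v hu hv hadj
      exact hIind a ha b hb hab ⟨hab, u, v, hu, hv, hadj⟩
    · set c : ℝ := (∑ e ∈ M, ((M.filter (conf G e ·)).card : ℝ)) + (M.card : ℝ) with hc
      have hc19 : c < 19 * (M.card : ℝ) := by
        have : (dsum G (msupp M) : ℝ) < 20 * (M.card : ℝ) := by linarith
        linarith
      have hI0 : (0:ℝ) ≤ (I.card : ℝ) := by positivity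
      have hDnn : (0:ℝ) ≤ (dsum G (msupp M) : ℝ) / (38000 * t) :=
        div_nonneg (by positivity) hC.le
      have hmain : (M.card : ℝ) / 19 ≤ (I.card : ℝ) := by
        nlinarith [mul_le_mul_of_nonneg_right hc19.le hI0, sq_nonneg ((M.card : ℝ))]
      linarith

end Aux

/-- Let `G` be bipartite with parts `A, B`, in which every vertex of `A` has degree at
most `t`, and suppose every induced subgraph of `G` with average degree at least `10`
contains a vertex of degree at least `1000·t` (in that subgraph). Then every matching `M`
in `G` contains an induced matching of size at least `|M|/20`. -/
theorem stmt7 {V : Type*} [Fintype V] [DecidableEq V] (G : SimpleGraph V)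
    [DecidableRel G.Adj] (A B : Set V)
    (hdisj : Disjoint A B)
    (hpart : ∀ u v, G.Adj u v → (u ∈ A ∧ v ∈ B) ∨ (u ∈ B ∧ v ∈ A))
    (t : ℕ) (hdegA : ∀ v ∈ A, G.degree v ≤ t)
    (hloc : ∀ S : Finset V,
      (10 : ℝ) ≤ (∑ v ∈ S, ((S.filter (G.Adj v ·)).card : ℝ)) / S.card →
      ∃ v ∈ S, 1000 * t ≤ (S.filter (G.Adj v ·)).card)
    (M : Finset (Sym2 V)) (hM : IsMatchingSet G M) :
    ∃ M' ⊆ M, IsInducedMatchingSet G M' ∧ (M.card : ℝ) / 20 ≤ M'.card := by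
  rcases Nat.eq_zero_or_pos t with rfl | ht
  · -- t = 0 : the graph has no edges at all, so M = ∅
    have hMe : M = ∅ := by
      by_contra hne
      obtain ⟨e, heM⟩ := Finset.nonempty_of_ne_empty hne
      have hedge : e ∈ G.edgeSet := hM.1 heM
      induction e using Sym2.ind with
      | _ a b =>
        have hadj : G.Adj a b := (SimpleGraph.mem_edgeSet G).1 hedge
        have : ∃ v ∈ A, ∃ w, G.Adj v w := by
          rcases hpart a b hadj with ⟨haA, _⟩ | ⟨_, hbA⟩
          · exact ⟨a, haA, b, hadj⟩
          · exact ⟨b, hbA, a, hadj.symm⟩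
        obtain ⟨v, hvA, w, hvw⟩ := this
        have h1 : 0 < G.degree v := by
          rw [SimpleGraph.degree_pos_iff_exists_adj]
          exact ⟨w, hvw⟩
        have h2 := hdegA v hvA
        omega
    subst hMe
    exact ⟨∅, Finset.Subset.refl _, ⟨⟨by simp, by simp⟩, by simp⟩, by simp⟩
  · have htR : (1:ℝ) ≤ (t:ℝ) := by exact_mod_cast ht
    have hC : (0:ℝ) < 38000 * (t:ℝ) := by linarith
    obtain ⟨M', hM'sub, hM'ind, hM'card⟩ := mainLemma G t ht hloc M.card M rfl hM
    refine ⟨M', hM'sub, hM'ind, ?_⟩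
    have hDle : dsum G (msupp M) ≤ 4 * t * M.card := by
      have h1 := dsum_le G A B hdisj hpart t hdegA (msupp M)
      have h2 := card_msupp_le M
      have h3 : 2 * (t * (msupp M).card) ≤ 2 * (t * (2 * M.card)) :=
        Nat.mul_le_mul_left 2 (Nat.mul_le_mul_left t h2)
      calc dsum G (msupp M) ≤ 2 * (t * (msupp M).card) := h1
        _ ≤ 2 * (t * (2 * M.card)) := h3
        _ = 4 * t * M.card := by ring
    have hDleR : (dsum G (msupp M) : ℝ) ≤ 4 * (t:ℝ) * (M.card : ℝ) := by
      exact_mod_cast hDle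
    have h7 : (dsum G (msupp M) : ℝ) / (38000 * t) ≤ (4 * (t:ℝ) * M.card) / (38000 * t) :=
      div_le_div_of_nonneg_right hDleR hC.le
    have h8 : (4 * (t:ℝ) * M.card) / (38000 * t) = (M.card : ℝ) / 9500 := by
      have htne : (t:ℝ) ≠ 0 := by linarith
      field_simp
      ring
    have hk0 : (0:ℝ) ≤ (M.card : ℝ) := by positivity
    rw [h8] at h7
    linarith
end

section
/- Let G be a bipartite d-regular graph with n vertices on each side such that every two sets A' ⊆ A, B' ⊆ B with |A'| = |B'| have e(A',B') ≤ 2|A'|²d/n + λ|A'| (λ-expander mixing property). Then every matching M in G with |M| ≤ n/ln d, where λ = o(d^{0.9}) and d is large, contains an induced matching of size at least |M|/(4d/log d + 2λ + 1). -/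
open Finset


lemma carowei {ι : Type*} [DecidableEq ι] (r : ι → ι → Prop) [DecidableRel r]
    (hsym : ∀ a b, r a b → r b a) (hirr : ∀ a, ¬ r a a) (s : Finset ι) :
    ∃ t ⊆ s, (∀ a ∈ t, ∀ b ∈ t, ¬ r a b) ∧
      ∑ a ∈ s, (1:ℝ) / (((s.filter (r a)).card : ℝ) + 1) ≤ t.card := by
  induction s using Finset.strongInduction with
  | _ s ih =>
    rcases s.eq_empty_or_nonempty with rfl | hs
    · exact ⟨∅, by simp⟩
    obtain ⟨a, ha, hmin⟩ := Finset.exists_min_image s (fun x => (s.filter (r x)).card) hs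
    set N : Finset ι := insert a (s.filter (r a)) with hN
    have haN : a ∈ N := mem_insert_self _ _
    set s' : Finset ι := s \ N with hs'
    have hsub : s' ⊆ s := sdiff_subset
    have hss : s' ⊂ s :=
      (Finset.ssubset_iff_of_subset hsub).2 ⟨a, ha, fun h => (mem_sdiff.1 h).2 haN⟩
    obtain ⟨t, hts, hind, hsum⟩ := ih s' hss
    refine ⟨insert a t, ?_, ?_, ?_⟩
    · exact insert_subset ha (hts.trans hsub)
    · intro x hx y hy
      rcases mem_insert.1 hx with rfl | hx' <;> rcases mem_insert.1 hy with rfl | hy'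
      · exact hirr _
      · intro hr
        have : y ∈ N := mem_insert.2 (Or.inr (mem_filter.2 ⟨hsub (hts hy'), hr⟩))
        exact (mem_sdiff.1 (hts hy')).2 this
      · intro hr
        have : x ∈ N := mem_insert.2 (Or.inr (mem_filter.2 ⟨hsub (hts hx'), hsym _ _ hr⟩))
        exact (mem_sdiff.1 (hts hx')).2 this
      · exact hind x hx' y hy'
    · have hat : a ∉ t := fun h => (mem_sdiff.1 (hts h)).2 haN
      rw [card_insert_of_notMem hat]
      have hsplit : s = s.filter (· ∈ N) ∪ s' := by
        ext x; simp only [hs', mem_union, mem_filter, mem_sdiff]; tauto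
      have hdisj : Disjoint (s.filter (· ∈ N)) s' := by
        rw [Finset.disjoint_left]
        intro x hx hx'
        exact (mem_sdiff.1 hx').2 (mem_filter.1 hx).2
      have hsum_split : ∑ x ∈ s, (1:ℝ) / (((s.filter (r x)).card : ℝ) + 1)
          = (∑ x ∈ s.filter (· ∈ N), (1:ℝ) / (((s.filter (r x)).card : ℝ) + 1))
            + ∑ x ∈ s', (1:ℝ) / (((s.filter (r x)).card : ℝ) + 1) := by
        rw [← Finset.sum_union hdisj, ← hsplit]
      rw [hsum_split]
      have h1 : ∑ x ∈ s.filter (· ∈ N), (1:ℝ) / (((s.filter (r x)).card : ℝ) + 1) ≤ 1 := by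
        have hb : ∀ x ∈ s.filter (· ∈ N), (1:ℝ) / (((s.filter (r x)).card : ℝ) + 1)
            ≤ 1 / (((s.filter (r a)).card : ℝ) + 1) := by
          intro x hx
          have := hmin x (mem_filter.1 hx).1
          apply one_div_le_one_div_of_le
          · exact Nat.cast_add_one_pos _
          · have : ((s.filter (r a)).card : ℝ) ≤ ((s.filter (r x)).card : ℝ) := Nat.cast_le.2 this
            linarith
        have hcard : ((s.filter (· ∈ N)).card : ℝ) ≤ ((s.filter (r a)).card : ℝ) + 1 := by
          have h1' : (s.filter (· ∈ N)).card ≤ N.card :=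
            card_le_card (fun x hx => (mem_filter.1 hx).2)
          have h2' : N.card ≤ (s.filter (r a)).card + 1 := card_insert_le _ _
          exact_mod_cast le_trans h1' h2'
        calc ∑ x ∈ s.filter (· ∈ N), (1:ℝ) / (((s.filter (r x)).card : ℝ) + 1)
            ≤ ∑ _x ∈ s.filter (· ∈ N), 1 / (((s.filter (r a)).card : ℝ) + 1) :=
              Finset.sum_le_sum hb
          _ = (s.filter (· ∈ N)).card * (1 / (((s.filter (r a)).card : ℝ) + 1)) := by
              rw [Finset.sum_const, nsmul_eq_mul]
          _ ≤ (((s.filter (r a)).card : ℝ) + 1) * (1 / (((s.filter (r a)).card : ℝ) + 1)) :=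
              mul_le_mul_of_nonneg_right hcard (one_div_nonneg.2 (Nat.cast_add_one_pos _).le)
          _ = 1 := mul_one_div_cancel (Nat.cast_add_one_pos _).ne'
      have h2 : ∑ x ∈ s', (1:ℝ) / (((s.filter (r x)).card : ℝ) + 1) ≤ t.card := by
        refine le_trans (Finset.sum_le_sum ?_) hsum
        intro x hx
        apply one_div_le_one_div_of_le
        · exact Nat.cast_add_one_pos _
        · have hsubf : (s'.filter (r x)) ⊆ s.filter (r x) := Finset.filter_subset_filter _ hsub
          have := Finset.card_le_card hsubf
          have : ((s'.filter (r x)).card : ℝ) ≤ ((s.filter (r x)).card : ℝ) := Nat.cast_le.2 this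
          linarith
      push_cast
      linarith
lemma carowei2 {ι : Type*} [DecidableEq ι] (r : ι → ι → Prop) [DecidableRel r]
    (hsym : ∀ a b, r a b → r b a) (hirr : ∀ a, ¬ r a a) (s : Finset ι) :
    ∃ t ⊆ s, (∀ a ∈ t, ∀ b ∈ t, ¬ r a b) ∧
      ((s.card : ℝ))^2 / ((∑ a ∈ s, ((s.filter (r a)).card : ℝ)) + s.card) ≤ t.card := by
  obtain ⟨t, hts, hind, hsum⟩ := carowei r hsym hirr s
  refine ⟨t, hts, hind, le_trans ?_ hsum⟩
  have h := Finset.sq_sum_div_le_sum_sq_div s (fun _ => (1:ℝ))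
      (g := fun a => ((s.filter (r a)).card : ℝ) + 1) (fun a _ => by positivity)
  simp only [one_pow, Finset.sum_const, nsmul_eq_mul, mul_one] at h
  have heq : (∑ a ∈ s, (((s.filter (r a)).card : ℝ) + 1))
      = (∑ a ∈ s, ((s.filter (r a)).card : ℝ)) + s.card := by
    rw [Finset.sum_add_distrib, Finset.sum_const, nsmul_eq_mul, mul_one]
  rw [heq] at h
  exact h

set_option maxHeartbeats 1000000 in
/-- Let `G` be a bipartite `d`-regular graph with `n` vertices on each side satisfying
the `λ`-expander mixing property `e(A',B') ≤ 2|A'|²d/n + λ|A'|` for all `A' ⊆ A`,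
`B' ⊆ B` with `|A'| = |B'|`. If `λ ≤ d^{0.9}` and `d` is sufficiently large, then every
matching `M` in `G` with `|M| ≤ n/ln d` contains an induced matching of size at least
`|M| / (4d/log d + 2λ + 1)`. -/
theorem stmt9 :
    ∃ d₀ : ℕ, ∀ (V : Type) [Fintype V] [DecidableEq V] (G : SimpleGraph V),
      ∀ [DecidableRel G.Adj], ∀ (A B : Finset V) (n d : ℕ) (lam : ℝ),
      (∀ v, v ∈ A ∨ v ∈ B) → Disjoint A B → A.card = n → B.card = n →
      (∀ u v, G.Adj u v → (u ∈ A ∧ v ∈ B) ∨ (u ∈ B ∧ v ∈ A)) →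
      G.IsRegularOfDegree d →
      (∀ A' ⊆ A, ∀ B' ⊆ B, A'.card = B'.card →
        ((((A' ×ˢ B').filter fun p => G.Adj p.1 p.2).card : ℝ)
          ≤ 2 * (A'.card : ℝ) ^ 2 * d / n + lam * A'.card)) →
      d₀ ≤ d → 0 ≤ lam → lam ≤ (d : ℝ) ^ (0.9 : ℝ) →
      ∀ M : Finset (Sym2 V), IsMatchingSet G M → (M.card : ℝ) ≤ n / Real.log d →
      ∃ M' ⊆ M, IsInducedMatchingSet G M' ∧
        (M.card : ℝ) / (4 * d / Real.log d + 2 * lam + 1) ≤ M'.card := by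
  refine ⟨3, ?_⟩
  intro V _ _ G _ A B n d lam hcover hdisj hAn hBn hbip hreg hmix hd hlam0 hlamd M hM hMn
  classical
  rcases Nat.eq_zero_or_pos M.card with hm0 | hm
  · refine ⟨∅, Finset.empty_subset _, ⟨⟨by simp, by simp⟩, by simp⟩, ?_⟩
    rw [hm0]
    simp
  have hd1 : (1:ℝ) < d := by
    have h3 : (3:ℕ) ≤ d := hd
    have : (3:ℝ) ≤ d := by exact_mod_cast h3
    linarith
  have hlog : 0 < Real.log d := Real.log_pos hd1
  have hm1 : (1:ℝ) ≤ M.card := by exact_mod_cast hm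
  have hmn : (M.card : ℝ) * Real.log d ≤ n := (le_div_iff₀ hlog).1 hMn
  have hn : (0:ℝ) < n := by nlinarith
  -- uniqueness of the matching edge containing a vertex
  have huniq : ∀ e ∈ M, ∀ f ∈ M, ∀ v : V, v ∈ e → v ∈ f → e = f := by
    intro e he f hf v hv hvf
    by_contra hne
    exact hM.2 e he f hf hne v hv hvf
  -- endpoints of an edge in the matching
  have hends : ∀ e ∈ M, ∃ a b : V, a ∈ A ∧ b ∈ B ∧ G.Adj a b ∧ e = s(a, b) := by
    intro e he
    have hedge : e ∈ G.edgeSet := hM.1 (Finset.mem_coe.mpr he)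
    revert hedge
    induction e using Sym2.ind with
    | _ u v =>
      intro hedge
      rw [SimpleGraph.mem_edgeSet] at hedge
      rcases hbip u v hedge with ⟨hu, hv⟩ | ⟨hu, hv⟩
      · exact ⟨u, v, hu, hv, hedge, rfl⟩
      · exact ⟨v, u, hv, hu, hedge.symm, Sym2.eq_swap⟩
  -- unique A endpoint
  have hAuniq : ∀ e ∈ M, ∀ x y : V, x ∈ A → x ∈ e → y ∈ A → y ∈ e → x = y := by
    intro e he x y hxA hxe hyA hye
    obtain ⟨a, b, haA, hbB, hadj, rfl⟩ := hends e he
    have hbA : b ∉ A := fun h => Finset.disjoint_left.1 hdisj h hbB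
    have hx : x = a := by
      rcases Sym2.mem_iff.1 hxe with h | h
      · exact h
      · exact absurd (h ▸ hxA) hbA
    have hy : y = a := by
      rcases Sym2.mem_iff.1 hye with h | h
      · exact h
      · exact absurd (h ▸ hyA) hbA
    rw [hx, hy]
  -- the sets of matched vertices on each side
  set A' := A.filter (fun v => ∃ e ∈ M, v ∈ e) with hA'
  set B' := B.filter (fun v => ∃ e ∈ M, v ∈ e) with hB'
  have hchA : ∀ e ∈ M, ∃ v : V, v ∈ A ∧ v ∈ e := by
    intro e he
    obtain ⟨a, b, haA, hbB, hadj, rfl⟩ := hends e he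
    exact ⟨a, haA, by simp⟩
  have hchB : ∀ e ∈ M, ∃ v : V, v ∈ B ∧ v ∈ e := by
    intro e he
    obtain ⟨a, b, haA, hbB, hadj, rfl⟩ := hends e he
    exact ⟨b, hbB, by simp⟩
  have hA'card : M.card = A'.card := by
    refine Finset.card_bij (fun e he => (hchA e he).choose) ?_ ?_ ?_
    · intro e he
      obtain ⟨hvA, hve⟩ := (hchA e he).choose_spec
      exact Finset.mem_filter.2 ⟨hvA, e, he, hve⟩
    · intro e he f hf hef
      obtain ⟨hvA, hve⟩ := (hchA e he).choose_spec
      obtain ⟨hwA, hwf⟩ := (hchA f hf).choose_spec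
      have hef' : (hchA e he).choose = (hchA f hf).choose := hef
      rw [← hef'] at hwf
      exact huniq e he f hf _ hve hwf
    · intro a ha
      obtain ⟨haA, e, he, hae⟩ := Finset.mem_filter.1 ha
      refine ⟨e, he, ?_⟩
      obtain ⟨hvA, hve⟩ := (hchA e he).choose_spec
      exact hAuniq e he _ a hvA hve haA hae
  have hBuniq : ∀ e ∈ M, ∀ x y : V, x ∈ B → x ∈ e → y ∈ B → y ∈ e → x = y := by
    intro e he x y hxB hxe hyB hye
    obtain ⟨a, b, haA, hbB, hadj, rfl⟩ := hends e he
    have haB : a ∉ B := fun h => Finset.disjoint_left.1 hdisj haA h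
    have hx : x = b := by
      rcases Sym2.mem_iff.1 hxe with h | h
      · exact absurd (h ▸ hxB) haB
      · exact h
    have hy : y = b := by
      rcases Sym2.mem_iff.1 hye with h | h
      · exact absurd (h ▸ hyB) haB
      · exact h
    rw [hx, hy]
  have hB'card : M.card = B'.card := by
    refine Finset.card_bij (fun e he => (hchB e he).choose) ?_ ?_ ?_
    · intro e he
      obtain ⟨hvB, hve⟩ := (hchB e he).choose_spec
      exact Finset.mem_filter.2 ⟨hvB, e, he, hve⟩
    · intro e he f hf hef
      obtain ⟨hvB, hve⟩ := (hchB e he).choose_spec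
      obtain ⟨hwB, hwf⟩ := (hchB f hf).choose_spec
      have hef' : (hchB e he).choose = (hchB f hf).choose := hef
      rw [← hef'] at hwf
      exact huniq e he f hf _ hve hwf
    · intro a ha
      obtain ⟨haB, e, he, hae⟩ := Finset.mem_filter.1 ha
      refine ⟨e, he, ?_⟩
      obtain ⟨hvB, hve⟩ := (hchB e he).choose_spec
      exact hBuniq e he _ a hvB hve haB hae
  -- the conflict relation
  set r : Sym2 V → Sym2 V → Prop :=
    fun e f => e ≠ f ∧ ∃ u v : V, u ∈ e ∧ v ∈ f ∧ G.Adj u v with hr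
  have hrsym : ∀ e f, r e f → r f e := by
    intro e f h
    simp only [hr] at h ⊢
    obtain ⟨hne, u, v, hu, hv, hadj⟩ := h
    exact ⟨hne.symm, v, u, hv, hu, hadj.symm⟩
  have hrirr : ∀ e, ¬ r e e := by
    intro e h
    simp only [hr] at h
    exact h.1 rfl
  obtain ⟨t, htM, hind, hcw⟩ := carowei2 r hrsym hrirr M
  -- the set of ordered conflict pairs
  set P := (M ×ˢ M).filter (fun p => r p.1 p.2) with hP
  have hDP : P.card = ∑ e ∈ M, (M.filter (r e)).card := by
    rw [Finset.card_eq_sum_card_fiberwise (f := Prod.fst) (t := M)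
      (fun p hp => (Finset.mem_product.1 (Finset.mem_filter.1 hp).1).1)]
    refine Finset.sum_congr rfl (fun e he => ?_)
    refine Finset.card_bij' (fun p _ => p.2) (fun f _ => (e, f)) ?_ ?_ ?_ ?_
    · intro p hp
      obtain ⟨hp1, hp2⟩ := Finset.mem_filter.1 hp
      obtain ⟨hpm, hrp⟩ := Finset.mem_filter.1 hp1
      exact Finset.mem_filter.2 ⟨(Finset.mem_product.1 hpm).2, hp2 ▸ hrp⟩
    · intro f hf
      obtain ⟨hfM, hrf⟩ := Finset.mem_filter.1 hf
      exact Finset.mem_filter.2 ⟨Finset.mem_filter.2 ⟨Finset.mem_product.2 ⟨he, hfM⟩, hrf⟩, rfl⟩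
    · intro p hp
      obtain ⟨_, hp2⟩ := Finset.mem_filter.1 hp
      exact Prod.ext hp2.symm rfl
    · intro f hf
      rfl
  -- nonempty V for the witness function
  obtain ⟨e₀, he₀⟩ := Finset.card_pos.1 hm
  obtain ⟨a₀, b₀, ha₀, hb₀, hadj₀, heq₀⟩ := hends e₀ he₀
  haveI hVne : Nonempty V := ⟨a₀⟩
  set X := ((A' ×ˢ B').filter fun p => G.Adj p.1 p.2) with hX
  have hQex : ∀ p ∈ P, ∃ c : V × V, c.1 ∈ A ∧ c.2 ∈ B ∧ G.Adj c.1 c.2 ∧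
      ((c.1 ∈ p.1 ∧ c.2 ∈ p.2) ∨ (c.1 ∈ p.2 ∧ c.2 ∈ p.1)) := by
    intro p hp
    have hrp := (Finset.mem_filter.1 hp).2
    simp only [hr] at hrp
    obtain ⟨hne, u, v, hu, hv, hadj⟩ := hrp
    rcases hbip u v hadj with ⟨huA, hvB⟩ | ⟨huB, hvA⟩
    · exact ⟨(u, v), huA, hvB, hadj, Or.inl ⟨hu, hv⟩⟩
    · exact ⟨(v, u), hvA, huB, hadj.symm, Or.inr ⟨hv, hu⟩⟩
  set wit : Sym2 V × Sym2 V → V × V := fun p =>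
    if h : ∃ c : V × V, c.1 ∈ A ∧ c.2 ∈ B ∧ G.Adj c.1 c.2 ∧
        ((c.1 ∈ p.1 ∧ c.2 ∈ p.2) ∨ (c.1 ∈ p.2 ∧ c.2 ∈ p.1)) then h.choose
    else Classical.arbitrary _ with hwit
  have hwitspec : ∀ p ∈ P, (wit p).1 ∈ A ∧ (wit p).2 ∈ B ∧ G.Adj (wit p).1 (wit p).2 ∧
      (((wit p).1 ∈ p.1 ∧ (wit p).2 ∈ p.2) ∨ ((wit p).1 ∈ p.2 ∧ (wit p).2 ∈ p.1)) := by
    intro p hp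
    have h := hQex p hp
    simp only [hwit, dif_pos h]
    exact h.choose_spec
  have hmapsto : ∀ p ∈ P, wit p ∈ X := by
    intro p hp
    obtain ⟨h1, h2, h3, h4⟩ := hwitspec p hp
    have hpm := (Finset.mem_filter.1 hp).1
    obtain ⟨hp1, hp2⟩ := Finset.mem_product.1 hpm
    refine Finset.mem_filter.2 ⟨Finset.mem_product.2 ⟨?_, ?_⟩, h3⟩
    · refine Finset.mem_filter.2 ⟨h1, ?_⟩
      rcases h4 with ⟨ha, _⟩ | ⟨ha, _⟩
      exacts [⟨p.1, hp1, ha⟩, ⟨p.2, hp2, ha⟩]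
    · refine Finset.mem_filter.2 ⟨h2, ?_⟩
      rcases h4 with ⟨_, hb⟩ | ⟨_, hb⟩
      exacts [⟨p.2, hp2, hb⟩, ⟨p.1, hp1, hb⟩]
  have hfiber : ∀ c ∈ X, (P.filter (fun p => wit p = c)).card ≤ 2 := by
    intro c hc
    rcases (P.filter (fun p => wit p = c)).eq_empty_or_nonempty with hemp | ⟨p₀, hp₀⟩
    · simp [hemp]
    · have key : ∀ q ∈ P.filter (fun p => wit p = c), q = p₀ ∨ q = (p₀.2, p₀.1) := by
        intro q hq
        obtain ⟨hqP, hqc⟩ := Finset.mem_filter.1 hq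
        obtain ⟨hp₀P, hp₀c⟩ := Finset.mem_filter.1 hp₀
        obtain ⟨_, _, _, h4q⟩ := hwitspec q hqP
        obtain ⟨_, _, _, h4p⟩ := hwitspec p₀ hp₀P
        rw [hqc] at h4q
        rw [hp₀c] at h4p
        obtain ⟨hq1, hq2⟩ := Finset.mem_product.1 (Finset.mem_filter.1 hqP).1
        obtain ⟨hp1, hp2⟩ := Finset.mem_product.1 (Finset.mem_filter.1 hp₀P).1
        rcases h4q with ⟨ha, hb⟩ | ⟨ha, hb⟩ <;> rcases h4p with ⟨ha', hb'⟩ | ⟨ha', hb'⟩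
        · left
          exact Prod.ext (huniq _ hq1 _ hp1 _ ha ha') (huniq _ hq2 _ hp2 _ hb hb')
        · right
          exact Prod.ext (huniq _ hq1 _ hp2 _ ha ha') (huniq _ hq2 _ hp1 _ hb hb')
        · right
          exact Prod.ext (huniq _ hq1 _ hp2 _ hb hb') (huniq _ hq2 _ hp1 _ ha ha')
        · left
          exact Prod.ext (huniq _ hq1 _ hp1 _ hb hb') (huniq _ hq2 _ hp2 _ ha ha')
      have hsub2 : P.filter (fun p => wit p = c) ⊆ insert p₀ {(p₀.2, p₀.1)} := by
        intro q hq
        rcases key q hq with h | h <;> simp [h]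
      calc (P.filter (fun p => wit p = c)).card
          ≤ (insert p₀ ({(p₀.2, p₀.1)} : Finset (Sym2 V × Sym2 V))).card :=
            Finset.card_le_card hsub2
        _ ≤ 2 := le_trans (Finset.card_insert_le _ _) (by simp)
  have hPX : P.card ≤ 2 * X.card :=
    Finset.card_le_mul_card_image_of_maps_to hmapsto 2 hfiber
  have hcards : A'.card = B'.card := by rw [← hA'card, hB'card]
  have hXbound : (X.card : ℝ) ≤ 2 * (A'.card : ℝ) ^ 2 * d / n + lam * A'.card :=
    hmix A' (Finset.filter_subset _ _) B' (Finset.filter_subset _ _) hcards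
  have hA'm : (A'.card : ℝ) = (M.card : ℝ) := by exact_mod_cast hA'card.symm
  set m : ℝ := (M.card : ℝ) with hmm
  set D : ℝ := ∑ e ∈ M, ((M.filter (r e)).card : ℝ) with hD
  have hDsum : D = (P.card : ℝ) := by
    rw [hD, ← Nat.cast_sum, hDP]
  have hm0' : (0:ℝ) ≤ m := le_trans zero_le_one hm1
  have hstep : 2 * m ^ 2 * (d : ℝ) / n ≤ 2 * m * d / Real.log d := by
    rw [div_le_div_iff₀ hn hlog]
    have hd0 : (0:ℝ) ≤ d := Nat.cast_nonneg d
    have hprod : (0:ℝ) ≤ 2 * m * d := by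
      have := mul_nonneg hm0' hd0
      linarith [mul_nonneg hm0' hd0]
    nlinarith [mul_le_mul_of_nonneg_left hmn hprod]
  set C : ℝ := 4 * (d : ℝ) / Real.log d + 2 * lam with hC
  have hC0 : 0 ≤ C := by
    have : (0:ℝ) ≤ 4 * (d : ℝ) / Real.log d :=
      div_nonneg (by positivity) hlog.le
    rw [hC]; linarith
  have hDC : D ≤ m * C := by
    rw [hDsum]
    have h1 : (P.card : ℝ) ≤ 2 * (X.card : ℝ) := by exact_mod_cast hPX
    have h2 : (X.card : ℝ) ≤ 2 * m ^ 2 * d / n + lam * m := by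
      rw [← hA'm]; exact hXbound
    calc (P.card : ℝ) ≤ 2 * (2 * m ^ 2 * d / n + lam * m) := by linarith
      _ ≤ 2 * (2 * m * d / Real.log d + lam * m) := by linarith
      _ = m * C := by rw [hC]; ring
  have hD0 : 0 ≤ D := by
    rw [hD]
    exact Finset.sum_nonneg (fun e _ => Nat.cast_nonneg _)
  have hfin : m / (C + 1) ≤ m ^ 2 / (D + m) := by
    rw [div_le_div_iff₀ (by linarith : (0:ℝ) < C + 1) (by linarith : (0:ℝ) < D + m)]
    have h1 : m * D ≤ m * (m * C) := mul_le_mul_of_nonneg_left hDC hm0'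
    calc m * (D + m) = m * D + m * m := by ring
      _ ≤ m * (m * C) + m * m := add_le_add_left h1 (m * m)
      _ = m ^ 2 * (C + 1) := by ring
  refine ⟨t, htM, ⟨⟨?_, ?_⟩, ?_⟩, ?_⟩
  · intro e he
    exact hM.1 (Finset.mem_coe.mpr (htM (Finset.mem_coe.mp he)))
  · intro e he f hf hne v hv
    exact hM.2 e (htM he) f (htM hf) hne v hv
  · intro e he f hf hne u v hu hv hadj
    refine hind e he f hf ?_
    simp only [hr]
    exact ⟨hne, u, v, hu, hv, hadj⟩
  · have hgoal : 4 * (d : ℝ) / Real.log d + 2 * lam + 1 = C + 1 := by rw [hC]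
    rw [hgoal]
    calc m / (C + 1) ≤ m ^ 2 / (D + m) := hfin
      _ ≤ t.card := hcw
end

section
/- Let G be a bipartite d-regular graph (d ≥ 2) with n vertices on each side and let k < n/2. Then the number M_k(G) of matchings of size k in G satisfies M_k(G) ≥ (end/k)^k · (1/(2e))^{4k²/n} · 1/(2πk). -/
/-!
Every matching with `j` edges avoids all but at most `2dj` of the `nd` edges, so it extends in at
least `nd - 2dj` ways, while a matching with `j + 1` edges arises from at most `j + 1` smaller ones.
Double counting gives `(j + 1) M_{j+1} ≥ (nd - 2dj) M_j`, hence
`k! M_k ≥ ∏_{i<k} nd (1 - 2i/n) ≥ (nd)^k e^{-2k²/n}`, the last step comparing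
`∑ log (1 - 2i/n)` with an integral. Stirling's bound `k! ≤ e √k (k/e)^k` then gives a bound
stronger than the claimed one.
-/

open Finset Nat

namespace Real

/-- A primitive of `log (1 - a)`; it is concave, so it lies below its tangents. -/
noncomputable def primLogOneSub (a : ℝ) : ℝ := -a - (1 - a) * log (1 - a)

lemma primLogOneSub_le_add_mul_log {a b : ℝ} (ha : a < 1) (hb : b < 1) :
    primLogOneSub b ≤ primLogOneSub a + (b - a) * log (1 - a) := by
  have ha' : 0 < 1 - a := by linarith
  have hb' : 0 < 1 - b := by linarith
  have hlog := log_le_sub_one_of_pos (div_pos ha' hb')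
  rw [log_div ha'.ne' hb'.ne'] at hlog
  have key : (1 - b) * (log (1 - a) - log (1 - b)) ≤ b - a := by
    have hsimp : (1 - b) * ((1 - a) / (1 - b) - 1) = b - a := by field_simp; ring
    exact hsimp ▸ mul_le_mul_of_nonneg_left hlog hb'.le
  unfold primLogOneSub
  nlinarith

lemma neg_sq_le_primLogOneSub {a : ℝ} (ha : a < 1) : -a ^ 2 ≤ primLogOneSub a := by
  have hlog : log (1 - a) ≤ -a := by linarith [log_le_sub_one_of_pos (by linarith : 0 < 1 - a)]
  unfold primLogOneSub
  nlinarith [mul_le_mul_of_nonneg_left hlog (by linarith : (0 : ℝ) ≤ 1 - a)]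

lemma primLogOneSub_le_mul_sum_log {c : ℝ} (hc : 0 ≤ c) {k : ℕ} (hk : k * c < 1) :
    primLogOneSub (k * c) ≤ c * ∑ i ∈ range k, log (1 - i * c) := by
  induction k with
  | zero => simp [primLogOneSub]
  | succ k ih =>
    have hkc : k * c < 1 := by push_cast at hk; nlinarith
    calc primLogOneSub ((k + 1 : ℕ) * c)
        ≤ primLogOneSub (k * c) + c * log (1 - k * c) := by
          have := primLogOneSub_le_add_mul_log hkc hk
          push_cast at this ⊢
          convert this using 2; ring
      _ ≤ c * ∑ i ∈ range (k + 1), log (1 - i * c) := by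
          rw [sum_range_succ, mul_add]
          linarith [ih hkc]

lemma exp_neg_sq_mul_le_prod_one_sub {c : ℝ} (hc : 0 < c) {k : ℕ} (hk : k * c < 1) :
    exp (-(k ^ 2 * c)) ≤ ∏ i ∈ range k, (1 - i * c) := by
  have hpos : ∀ i ∈ range k, 0 < 1 - i * c := fun i hi => by
    have : (i : ℝ) < k := by exact_mod_cast mem_range.mp hi
    nlinarith
  rw [← prod_congr rfl fun i hi => exp_log (hpos i hi), ← exp_sum, exp_le_exp]
  have := (neg_sq_le_primLogOneSub hk).trans (primLogOneSub_le_mul_sum_log hc.le hk)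
  rw [← mul_le_mul_iff_of_pos_left hc]
  nlinarith

lemma factorial_le_exp_one_mul_sqrt_mul_pow {k : ℕ} (hk : k ≠ 0) :
    (k ! : ℝ) ≤ exp 1 * √k * (k / exp 1) ^ k := by
  obtain ⟨m, rfl⟩ := exists_eq_succ_of_ne_zero hk
  have h : Stirling.stirlingSeq (m + 1) ≤ exp 1 / √2 := by
    simpa using Stirling.stirlingSeq'_antitone (Nat.zero_le m)
  rw [Stirling.stirlingSeq, div_le_iff₀ (by positivity), sqrt_mul zero_le_two] at h
  refine h.trans (le_of_eq ?_)
  push_cast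
  field_simp

lemma exp_one_mul_pow_mul_rpow_mul_factorial_le {n k : ℕ} (hk : k ≠ 0) {x : ℝ} (hx : 0 ≤ x) :
    (exp 1 * x / k) ^ k * (1 / (2 * exp 1)) ^ ((4 * k ^ 2 : ℝ) / n) * (1 / (2 * π * k)) *
      k ! ≤ x ^ k * exp (-(2 * k ^ 2 / n)) := by
  have hk1 : (1 : ℝ) ≤ k := by exact_mod_cast one_le_iff_ne_zero.mpr hk
  have hrpow : (1 / (2 * exp 1)) ^ ((4 * k ^ 2 : ℝ) / n) ≤ exp (-(2 * k ^ 2 / n)) := by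
    have hbase : 1 / (2 * exp 1) ≤ exp (-1) := by
      rw [exp_neg, ← one_div]
      gcongr
      linarith [exp_pos 1]
    calc (1 / (2 * exp 1)) ^ ((4 * k ^ 2 : ℝ) / n) ≤ exp (-1) ^ ((4 * k ^ 2 : ℝ) / n) := by
          gcongr
      _ ≤ exp (-(2 * k ^ 2 / n)) := by
          rw [← exp_mul, exp_le_exp, neg_one_mul, neg_le_neg_iff]
          gcongr
          linarith
  have hconst : exp 1 * √k / (2 * π * k) ≤ 1 := by
    rw [div_le_one (by positivity)]
    have : √(k : ℝ) ≤ k := by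
      rw [sqrt_le_left (by linarith)]
      nlinarith
    nlinarith [exp_one_lt_d9, pi_gt_three, exp_pos 1]
  calc (exp 1 * x / k) ^ k * (1 / (2 * exp 1)) ^ ((4 * k ^ 2 : ℝ) / n) * (1 / (2 * π * k)) * k !
      ≤ (exp 1 * x / k) ^ k * (1 / (2 * exp 1)) ^ ((4 * k ^ 2 : ℝ) / n) * (1 / (2 * π * k)) *
          (exp 1 * √k * (k / exp 1) ^ k) := by
        gcongr
        exact factorial_le_exp_one_mul_sqrt_mul_pow hk
    _ = x ^ k * (1 / (2 * exp 1)) ^ ((4 * k ^ 2 : ℝ) / n) * (exp 1 * √k / (2 * π * k)) := by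
        have hcancel : (exp 1 * x / k) ^ k * (k / exp 1) ^ k = x ^ k := by
          rw [← mul_pow]
          field_simp
        rw [← hcancel]
        ring
    _ ≤ x ^ k * exp (-(2 * k ^ 2 / n)) * 1 := by gcongr
    _ = x ^ k * exp (-(2 * k ^ 2 / n)) := mul_one _

end Real

namespace SimpleGraph

variable {V : Type*} [Fintype V] (G : SimpleGraph V)

open Classical in
noncomputable def matchingsOfCard (j : ℕ) : Finset (Finset (Sym2 V)) :=
  {M | IsMatchingSet G M ∧ #M = j}

lemma mem_matchingsOfCard {j : ℕ} {M : Finset (Sym2 V)} :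
    M ∈ G.matchingsOfCard j ↔ IsMatchingSet G M ∧ #M = j := by
  simp [matchingsOfCard]

lemma natCard_matchings_eq_card_matchingsOfCard (j : ℕ) :
    Nat.card {M : Finset (Sym2 V) // IsMatchingSet G M ∧ #M = j} = #(G.matchingsOfCard j) := by
  classical
  rw [Nat.card_eq_fintype_card, Fintype.card_subtype, matchingsOfCard]

variable [DecidableEq V] [DecidableRel G.Adj]

def freeEdges (N : Finset (Sym2 V)) : Finset (Sym2 V) :=
  {e ∈ G.edgeFinset | ∀ f ∈ N, ∀ v ∈ e, v ∉ f}

lemma card_edges_meeting_le {d : ℕ} (hdeg : ∀ v, G.degree v ≤ d) (f : Sym2 V) :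
    #{e ∈ G.edgeFinset | ∃ v ∈ e, v ∈ f} ≤ 2 * d := by
  induction f using Sym2.ind with
  | _ u w =>
  calc #{e ∈ G.edgeFinset | ∃ v ∈ e, v ∈ s(u, w)}
      ≤ #(G.incidenceFinset u ∪ G.incidenceFinset w) := by
        refine card_le_card fun e he => ?_
        obtain ⟨he, v, hve, hv⟩ := mem_filter.mp he
        have hinc : e ∈ G.incidenceFinset v :=
          (G.mem_incidenceFinset v e).mpr ⟨mem_edgeFinset.mp he, hve⟩
        rcases Sym2.mem_iff.mp hv with rfl | rfl
        · exact mem_union_left _ hinc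
        · exact mem_union_right _ hinc
    _ ≤ G.degree u + G.degree w := by
        rw [← card_incidenceFinset_eq_degree, ← card_incidenceFinset_eq_degree]
        exact card_union_le _ _
    _ ≤ 2 * d := by linarith [hdeg u, hdeg w]

lemma card_edgeFinset_sub_le_card_freeEdges {d : ℕ} (hdeg : ∀ v, G.degree v ≤ d)
    (N : Finset (Sym2 V)) : #G.edgeFinset - 2 * d * #N ≤ #(G.freeEdges N) := by
  have hcover : G.edgeFinset ⊆
      G.freeEdges N ∪ N.biUnion fun f => {e ∈ G.edgeFinset | ∃ v ∈ e, v ∈ f} := by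
    intro e he
    by_cases hfree : ∀ f ∈ N, ∀ v ∈ e, v ∉ f
    · exact mem_union_left _ (mem_filter.mpr ⟨he, hfree⟩)
    · push Not at hfree
      obtain ⟨f, hf, v, hve, hvf⟩ := hfree
      exact mem_union_right _ (mem_biUnion.mpr ⟨f, hf, mem_filter.mpr ⟨he, v, hve, hvf⟩⟩)
  have hmeet : #(N.biUnion fun f => {e ∈ G.edgeFinset | ∃ v ∈ e, v ∈ f}) ≤ 2 * d * #N :=
    calc _ ≤ ∑ f ∈ N, #{e ∈ G.edgeFinset | ∃ v ∈ e, v ∈ f} := card_biUnion_le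
      _ ≤ ∑ _f ∈ N, 2 * d := sum_le_sum fun f _ => G.card_edges_meeting_le hdeg f
      _ = 2 * d * #N := by rw [sum_const, smul_eq_mul, mul_comm]
  have := (card_le_card hcover).trans (card_union_le _ _)
  omega

lemma notMem_of_mem_freeEdges {N : Finset (Sym2 V)} {e : Sym2 V} (he : e ∈ G.freeEdges N) :
    e ∉ N := fun heN => by
  induction e using Sym2.ind with
  | _ u w => exact (mem_filter.mp he).2 _ heN u (Sym2.mem_mk_left u w) (Sym2.mem_mk_left u w)

variable {G} in
lemma _root_.IsMatchingSet.insert {N : Finset (Sym2 V)} (hN : IsMatchingSet G N) {e : Sym2 V}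
    (he : e ∈ G.freeEdges N) : IsMatchingSet G (insert e N) := by
  obtain ⟨heG, hfree⟩ := mem_filter.mp he
  refine ⟨?_, fun e₁ he₁ e₂ he₂ hne v hv₁ => ?_⟩
  · rw [coe_insert]
    exact Set.insert_subset (mem_edgeFinset.mp heG) hN.1
  rcases mem_insert.mp he₁ with rfl | h₁ <;> rcases mem_insert.mp he₂ with rfl | h₂
  · exact absurd rfl hne
  · exact hfree e₂ h₂ v hv₁
  · exact fun hv₂ => hfree e₁ h₁ v hv₂ hv₁
  · exact hN.2 e₁ h₁ e₂ h₂ hne v hv₁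

lemma card_matchingsOfCard_mul_le {d : ℕ} (hdeg : ∀ v, G.degree v ≤ d) (j : ℕ) :
    #(G.matchingsOfCard j) * (#G.edgeFinset - 2 * d * j) ≤
      #(G.matchingsOfCard (j + 1)) * (j + 1) := by
  refine card_mul_le_card_mul (· ⊆ ·) (fun N hN => ?_) (fun M hM => ?_)
  · have ⟨hNG, hNj⟩ : IsMatchingSet G N ∧ #N = j := G.mem_matchingsOfCard.mp hN
    calc #G.edgeFinset - 2 * d * j ≤ #(G.freeEdges N) :=
          hNj ▸ G.card_edgeFinset_sub_le_card_freeEdges hdeg N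
      _ ≤ _ := by
        refine card_le_card_of_injOn (insert · N) (fun e he => ?_)
          (fun e he e' _ h => (insert_inj (G.notMem_of_mem_freeEdges he)).mp h)
        rw [mem_coe, mem_bipartiteAbove, mem_matchingsOfCard,
          card_insert_of_notMem (G.notMem_of_mem_freeEdges he), hNj]
        exact ⟨⟨hNG.insert he, rfl⟩, subset_insert e N⟩
  · obtain ⟨-, hMj⟩ := G.mem_matchingsOfCard.mp hM
    calc #((G.matchingsOfCard j).bipartiteBelow (· ⊆ ·) M) ≤ #(powersetCard j M) := by
          refine card_le_card fun N hN => ?_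
          obtain ⟨hN, hNM⟩ := (mem_bipartiteBelow _).mp hN
          exact mem_powersetCard.mpr ⟨hNM, (G.mem_matchingsOfCard.mp hN).2⟩
      _ = j + 1 := by rw [card_powersetCard, hMj, choose_succ_self_right]

lemma prod_sub_le_factorial_mul_card_matchingsOfCard {d : ℕ} (hdeg : ∀ v, G.degree v ≤ d) (k : ℕ) :
    ∏ i ∈ range k, (#G.edgeFinset - 2 * d * i) ≤ k ! * #(G.matchingsOfCard k) := by
  induction k with
  | zero =>
    rw [range_zero, prod_empty, factorial_zero, one_mul, one_le_card]
    exact ⟨∅, G.mem_matchingsOfCard.mpr ⟨⟨by simp, by simp⟩, rfl⟩⟩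
  | succ k ih =>
    calc ∏ i ∈ range (k + 1), (#G.edgeFinset - 2 * d * i)
        ≤ k ! * (#(G.matchingsOfCard k) * (#G.edgeFinset - 2 * d * k)) := by
          rw [prod_range_succ, ← mul_assoc]
          exact Nat.mul_le_mul_right _ ih
      _ ≤ (k + 1)! * #(G.matchingsOfCard (k + 1)) := by
          rw [factorial_succ]
          nlinarith [G.card_matchingsOfCard_mul_le hdeg k]

omit [DecidableEq V] in
lemma IsRegularOfDegree.two_mul_card_edgeFinset {d : ℕ} (h : G.IsRegularOfDegree d) :
    2 * #G.edgeFinset = Fintype.card V * d := by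
  rw [← sum_degrees_eq_twice_card_edges, sum_congr rfl fun v _ => h v, sum_const,
    Finset.card_univ, smul_eq_mul]

lemma cast_pow_mul_exp_le_factorial_mul_card_matchingsOfCard {n d k : ℕ}
    (hdeg : ∀ v, G.degree v ≤ d) (hE : #G.edgeFinset = n * d) (hk : 2 * k < n) :
    ((n : ℝ) * d) ^ k * Real.exp (-(2 * k ^ 2 / n)) ≤ k ! * #(G.matchingsOfCard k) := by
  have hn : (0 : ℝ) < n := by exact_mod_cast (by omega : 0 < n)
  have hkc : k * (2 / n : ℝ) < 1 := by
    rw [mul_div_assoc', div_lt_one hn]; exact_mod_cast (by omega : k * 2 < n)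
  have hfactor : ∀ i ∈ range k,
      (n : ℝ) * d * (1 - i * (2 / n)) = (#G.edgeFinset - 2 * d * i : ℕ) := fun i hi => by
    have hi : 2 * i ≤ n := by have := mem_range.mp hi; omega
    rw [hE, Nat.cast_sub (by nlinarith)]
    push_cast
    field_simp
  calc ((n : ℝ) * d) ^ k * Real.exp (-(2 * k ^ 2 / n))
      ≤ ((n : ℝ) * d) ^ k * ∏ i ∈ range k, (1 - (i : ℝ) * (2 / n)) := by
        rw [mul_comm 2 ((k : ℝ) ^ 2), mul_div_assoc]
        gcongr
        exact Real.exp_neg_sq_mul_le_prod_one_sub (by positivity) hkc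
    _ = ((∏ i ∈ range k, (#G.edgeFinset - 2 * d * i) : ℕ) : ℝ) := by
        rw [Nat.cast_prod, ← prod_congr rfl hfactor, prod_mul_distrib, prod_const, card_range]
    _ ≤ k ! * #(G.matchingsOfCard k) := by
        exact_mod_cast G.prod_sub_le_factorial_mul_card_matchingsOfCard hdeg k

end SimpleGraph

open SimpleGraph in
theorem stmt13_general {V : Type*} [Fintype V] (G : SimpleGraph V)
    [DecidableRel G.Adj] (A B : Finset V) (n d k : ℕ)
    (hcover : ∀ v, v ∈ A ∨ v ∈ B) (hdisj : Disjoint A B)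
    (hA : A.card = n) (hB : B.card = n)
    (hreg : G.IsRegularOfDegree d) (hk : 2 * k < n) :
    (Real.exp 1 * n * d / k) ^ k * (1 / (2 * Real.exp 1)) ^ ((4 * k ^ 2 : ℝ) / n)
        * (1 / (2 * Real.pi * k)) ≤
      (Nat.card {M : Finset (Sym2 V) // IsMatchingSet G M ∧ M.card = k} : ℝ) := by
  classical
  rcases Nat.eq_zero_or_pos k with rfl | hk0
  · simp
  have hV : Fintype.card V = 2 * n := by
    rw [← Finset.card_univ, ← eq_univ_of_forall fun v => mem_union.mpr (hcover v),
      card_union_of_disjoint hdisj, hA, hB, two_mul]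
  have hE : #G.edgeFinset = n * d := by
    have := hreg.two_mul_card_edgeFinset
    rw [hV, mul_assoc] at this
    omega
  have hcount := G.cast_pow_mul_exp_le_factorial_mul_card_matchingsOfCard (fun v => (hreg v).le)
    hE hk
  have hbound := Real.exp_one_mul_pow_mul_rpow_mul_factorial_le (n := n) hk0.ne'
    (by positivity : (0 : ℝ) ≤ n * d)
  rw [← mul_assoc (Real.exp 1)] at hbound
  rw [mul_comm (k ! : ℝ)] at hcount
  rw [natCard_matchings_eq_card_matchingsOfCard]
  exact le_of_mul_le_mul_right (hbound.trans hcount) (by positivity)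

/-- Let `G` be a bipartite `d`-regular graph (`d ≥ 2`) with `n` vertices on each side and
let `k < n/2`. Then the number of matchings of size `k` in `G` is at least
`(end/k)^k · (1/(2e))^{4k²/n} · 1/(2πk)`. -/
theorem stmt13 {V : Type*} [Fintype V] [DecidableEq V] (G : SimpleGraph V)
    [DecidableRel G.Adj] (A B : Finset V) (n d k : ℕ)
    (hcover : ∀ v, v ∈ A ∨ v ∈ B) (hdisj : Disjoint A B)
    (hA : A.card = n) (hB : B.card = n)
    (hbip : ∀ u v, G.Adj u v → (u ∈ A ∧ v ∈ B) ∨ (u ∈ B ∧ v ∈ A))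
    (hreg : G.IsRegularOfDegree d) (hd : 2 ≤ d) (hk : 2 * k < n) :
    (Real.exp 1 * n * d / k) ^ k * (1 / (2 * Real.exp 1)) ^ ((4 * k ^ 2 : ℝ) / n)
        * (1 / (2 * Real.pi * k)) ≤
      (Nat.card {M : Finset (Sym2 V) // IsMatchingSet G M ∧ M.card = k} : ℝ) :=
  stmt13_general G A B n d k hcover hdisj hA hB hreg hk
end

section
/- Let G be a random bipartite graph with n vertices on each side where each edge appears independently with probability p = 32√(log n / n). Then with high probability G contains a (2√(n log n))-regular spanning subgraph. -/
open MeasureTheory Finset ENNReal Real Filter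

namespace Stmt17Aux

section Det
variable {n : ℕ}

/-- Build `j` pairwise edge-disjoint "matchings" (injections) inside `E`. -/
lemma exists_family (k r : ℕ) (E : Fin n × Fin n → Bool)
    (Hrow : ∀ a : Fin n, k + r ≤ #(univ.filter fun b => E (a, b) = true))
    (Hcol : ∀ b : Fin n, k + r ≤ #(univ.filter fun a => E (a, b) = true))
    (H2 : ∀ S T : Finset (Fin n), n + 1 ≤ #S + #T → r ≤ #S → r ≤ #T →
      k * min #S #T < #((S ×ˢ T).filter fun q => E q = true)) :
    ∀ j, j ≤ k → ∃ f : Fin j → Fin n → Fin n,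
      (∀ i, Function.Injective (f i)) ∧
      (∀ (a : Fin n) (i i' : Fin j), f i a = f i' a → i = i') ∧
      (∀ i a, E (a, f i a) = true) := by
  intro j
  induction j with
  | zero =>
    exact fun _ => ⟨fun i => i.elim0, fun i => i.elim0, fun a i => i.elim0, fun i => i.elim0⟩
  | succ j ih =>
    intro hjk
    obtain ⟨f, finj, fdist, fE⟩ := ih (Nat.le_of_succ_le hjk)
    set nb : Fin n → Finset (Fin n) :=
      fun a => univ.filter (fun b => E (a, b) = true ∧ ∀ i, f i a ≠ b) with hnb
    have hA : ∀ a, k + r ≤ #(nb a) + j := by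
      intro a
      have h1 : (univ.filter fun b => E (a, b) = true) \ ((univ : Finset (Fin j)).image (fun i => f i a))
          ⊆ nb a := by
        intro b hb
        simp only [Finset.mem_sdiff, mem_filter, mem_univ, true_and, mem_image, not_exists, hnb] at hb ⊢
        exact ⟨hb.1, fun i hib => hb.2 i hib⟩
      have h2 := card_le_card h1
      have h3 := card_le_card_sdiff_add_card (s := univ.filter fun b => E (a, b) = true)
        (t := (univ : Finset (Fin j)).image (fun i => f i a))
      have h4 : #((univ : Finset (Fin j)).image (fun i => f i a)) ≤ j := by
        simpa using card_image_le (s := (univ : Finset (Fin j))) (f := fun i => f i a)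
      have := Hrow a
      omega
    have hB : ∀ b : Fin n,
        k + r ≤ #(univ.filter fun a => E (a, b) = true ∧ ∀ i, f i a ≠ b) + j := by
      intro b
      have h1 : (univ.filter fun a => E (a, b) = true) \
          ((univ : Finset (Fin j)).biUnion (fun i => univ.filter fun a => f i a = b))
          ⊆ univ.filter fun a => E (a, b) = true ∧ ∀ i, f i a ≠ b := by
        intro a ha
        simp only [Finset.mem_sdiff, mem_filter, mem_univ, true_and, mem_biUnion, not_exists] at ha ⊢
        exact ⟨ha.1, fun i hib => ha.2 i hib⟩
      have h2 := card_le_card h1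
      have h3 := card_le_card_sdiff_add_card (s := univ.filter fun a => E (a, b) = true)
        (t := (univ : Finset (Fin j)).biUnion (fun i => univ.filter fun a => f i a = b))
      have h4 : #((univ : Finset (Fin j)).biUnion (fun i => univ.filter fun a => f i a = b)) ≤ j := by
        refine (card_biUnion_le).trans ?_
        have : ∀ i ∈ (univ : Finset (Fin j)), #(univ.filter fun a => f i a = b) ≤ 1 := by
          intro i _
          refine card_le_one.mpr ?_
          intro a ha a' ha'
          simp only [mem_filter] at ha ha'
          exact finj i (ha.2.trans ha'.2.symm)
        calc ∑ i, #(univ.filter fun a => f i a = b) ≤ ∑ _i : Fin j, 1 :=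
              Finset.sum_le_sum this
          _ = j := by simp
      have := Hcol b
      omega
    have hall : ∀ S : Finset (Fin n), #S ≤ #(S.biUnion nb) := by
      intro S
      by_contra hcon
      push_neg at hcon
      set N := S.biUnion nb with hN
      have hNS : ∀ a ∈ S, nb a ⊆ N := fun a ha => subset_biUnion_of_mem nb ha
      have key : ∀ a ∈ S, ∀ b : Fin n, b ∉ N → E (a, b) = true → ∃ i, f i a = b := by
        intro a ha b hbN hab
        by_contra hno
        push_neg at hno
        exact hbN (hNS a ha (by simp [hnb, hab, hno]))
      have hSn : #S ≤ n := by simpa using card_le_card (subset_univ S)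
      have hNn : #N ≤ n := by simpa using card_le_card (subset_univ N)
      rcases le_or_gt (#S + j) (k + r) with hsmall | hbig
      · -- small case
        have hS0 : 0 < #S := by omega
        obtain ⟨a, ha⟩ := card_pos.mp hS0
        have := card_le_card (hNS a ha)
        have := hA a
        omega
      · -- big case
        have hcompl : #(Nᶜ) = n - #N := by
          simp [card_compl]
        rcases le_or_gt r (#(Nᶜ)) with hta | htb
        · -- middle case: use H2
          have hst : n + 1 ≤ #S + #(Nᶜ) := by omega
          have hrs : r ≤ #S := by omega
          have hlt := H2 S Nᶜ hst hrs hta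
          set e := #((S ×ˢ Nᶜ).filter fun q => E q = true) with he
          have hkey2 : ∀ q ∈ (S ×ˢ Nᶜ).filter fun q => E q = true, ∃ i, f i q.1 = q.2 := by
            intro q hq
            simp only [mem_filter, mem_product, mem_compl] at hq
            exact key q.1 hq.1.1 q.2 hq.1.2 hq.2
          -- e ≤ j * #S
          have hb1 : e ≤ j * #S := by
            have hsub : (S ×ˢ Nᶜ).filter (fun q => E q = true) ⊆
                (univ : Finset (Fin j)).biUnion (fun i => S.image (fun a => (a, f i a))) := by
              intro q hq
              obtain ⟨i, hi⟩ := hkey2 q hq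
              simp only [mem_filter, mem_product] at hq
              refine mem_biUnion.mpr ⟨i, mem_univ i, mem_image.mpr ⟨q.1, hq.1.1, ?_⟩⟩
              rw [hi]
            refine (card_le_card hsub).trans ?_
            refine card_biUnion_le.trans ?_
            calc ∑ _i : Fin j, #(S.image (fun a => (a, f _i a))) ≤ ∑ _i : Fin j, #S := by
                  exact Finset.sum_le_sum fun i _ => card_image_le
              _ = j * #S := by simp [mul_comm]
          -- e ≤ j * #Nᶜ
          have hb2 : e ≤ j * #(Nᶜ) := by
            have hsub : (S ×ˢ Nᶜ).filter (fun q => E q = true) ⊆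
                (univ : Finset (Fin j)).biUnion
                  (fun i => ((S.filter fun a => f i a ∈ Nᶜ)).image (fun a => (a, f i a))) := by
              intro q hq
              obtain ⟨i, hi⟩ := hkey2 q hq
              simp only [mem_filter, mem_product] at hq
              refine mem_biUnion.mpr ⟨i, mem_univ i,
                mem_image.mpr ⟨q.1, mem_filter.mpr ⟨hq.1.1, by rw [hi]; exact hq.1.2⟩, ?_⟩⟩
              rw [hi]
            refine (card_le_card hsub).trans ?_
            refine card_biUnion_le.trans ?_
            have hstep : ∀ i : Fin j, #(((S.filter fun a => f i a ∈ Nᶜ)).image (fun a => (a, f i a)))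
                ≤ #(Nᶜ) := by
              intro i
              refine card_image_le.trans ?_
              have : #(S.filter fun a => f i a ∈ Nᶜ) =
                  #((S.filter fun a => f i a ∈ Nᶜ).image (f i)) :=
                (card_image_of_injective _ (finj i)).symm
              rw [this]
              refine card_le_card ?_
              intro b hb
              simp only [mem_image, mem_filter] at hb
              obtain ⟨a, ⟨_, ha2⟩, rfl⟩ := hb
              exact ha2
            calc ∑ i : Fin j, #(((S.filter fun a => f i a ∈ Nᶜ)).image (fun a => (a, f i a)))
                ≤ ∑ _i : Fin j, #(Nᶜ) := Finset.sum_le_sum fun i _ => hstep i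
              _ = j * #(Nᶜ) := by simp [mul_comm]
          have hmin : e ≤ j * min #S #(Nᶜ) := by
            rcases min_cases #S #(Nᶜ) with ⟨hm, _⟩ | ⟨hm, _⟩ <;> rw [hm]
            · exact hb1
            · exact hb2
          have hjk' : j * min #S #(Nᶜ) ≤ k * min #S #(Nᶜ) :=
            Nat.mul_le_mul_right _ (by omega)
          omega
        · -- tiny complement case
          have ht1 : 1 ≤ #(Nᶜ) := by omega
          obtain ⟨b, hb⟩ := card_pos.mp ht1
          have hbN : b ∉ N := mem_compl.mp hb
          have hsub : (univ.filter fun a => E (a, b) = true ∧ ∀ i, f i a ≠ b) ⊆ Sᶜ := by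
            intro a ha
            simp only [mem_filter, mem_univ, true_and] at ha
            refine mem_compl.mpr fun haS => ?_
            obtain ⟨i, hi⟩ := key a haS b hbN ha.1
            exact ha.2 i hi
          have h5 := card_le_card hsub
          have h6 : #(Sᶜ) = n - #S := by simp [card_compl]
          have := hB b
          omega
    obtain ⟨g, ginj, hg⟩ := (Finset.all_card_le_biUnion_card_iff_exists_injective nb).mp hall
    have hgmem : ∀ a, E (a, g a) = true ∧ ∀ i, f i a ≠ g a := by
      intro a
      have := hg a
      simpa [hnb] using this
    refine ⟨Fin.snoc f g, ?_, ?_, ?_⟩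
    · intro i
      refine Fin.lastCases ?_ ?_ i
      · simpa [Fin.snoc] using ginj
      · intro i'
        simpa [Fin.snoc_castSucc] using finj i'
    · intro a i i'
      refine Fin.lastCases ?_ ?_ i <;> [skip; intro i₀] <;>
        refine fun h => ?_
      · revert h
        refine Fin.lastCases ?_ ?_ i'
        · intro; rfl
        · intro i₁ h
          rw [Fin.snoc_last, Fin.snoc_castSucc] at h
          exact absurd h.symm ((hgmem a).2 i₁)
      · revert h
        refine Fin.lastCases ?_ ?_ i'
        · intro h
          rw [Fin.snoc_last, Fin.snoc_castSucc] at h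
          exact absurd h ((hgmem a).2 i₀)
        · intro i₁ h
          rw [Fin.snoc_castSucc, Fin.snoc_castSucc] at h
          exact congrArg Fin.castSucc (fdist a i₀ i₁ h)
    · intro i a
      refine Fin.lastCases ?_ ?_ i
      · rw [Fin.snoc_last]; exact (hgmem a).1
      · intro i₀; rw [Fin.snoc_castSucc]; exact fE i₀ a



end Det

lemma det_main {n : ℕ} (k r : ℕ) (E : Fin n × Fin n → Bool)
    (Hrow : ∀ a : Fin n, k + r ≤ #(univ.filter fun b => E (a, b) = true))
    (Hcol : ∀ b : Fin n, k + r ≤ #(univ.filter fun a => E (a, b) = true))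
    (H2 : ∀ S T : Finset (Fin n), n + 1 ≤ #S + #T → r ≤ #S → r ≤ #T →
      k * min #S #T < #((S ×ˢ T).filter fun q => E q = true)) :
    ∃ H : Fin n × Fin n → Bool, (∀ p, H p = true → E p = true) ∧
      (∀ a : Fin n, #(univ.filter fun b => H (a, b) = true) = k) ∧
      (∀ b : Fin n, #(univ.filter fun a => H (a, b) = true) = k) := by
  obtain ⟨f, finj, fdist, fE⟩ := exists_family k r E Hrow Hcol H2 k le_rfl
  have fbij : ∀ i, Function.Bijective (f i) :=
    fun i => (Finite.injective_iff_bijective).mp (finj i)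
  let e : Fin k → Fin n ≃ Fin n := fun i => Equiv.ofBijective (f i) (fbij i)
  have he : ∀ i a, e i a = f i a := fun i a => rfl
  refine ⟨fun q => decide (∃ i, f i q.1 = q.2), ?_, ?_, ?_⟩
  · intro p hp
    rw [decide_eq_true_iff] at hp
    obtain ⟨i, hi⟩ := hp
    have := fE i p.1
    rwa [hi, Prod.mk.eta] at this
  · intro a
    have : (univ.filter fun b => (decide (∃ i, f i a = b)) = true)
        = (univ : Finset (Fin k)).image (fun i => f i a) := by
      ext b
      simp [decide_eq_true_iff, eq_comm]
    rw [this, card_image_of_injective _ (fun i i' h => fdist a i i' h)]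
    simp
  · intro b
    have : (univ.filter fun a => (decide (∃ i, f i a = b)) = true)
        = (univ : Finset (Fin k)).image (fun i => (e i).symm b) := by
      ext a
      simp only [mem_filter, mem_univ, true_and, decide_eq_true_iff, mem_image]
      constructor
      · rintro ⟨i, hi⟩
        exact ⟨i, by rw [← hi]; exact (e i).symm_apply_apply a⟩
      · rintro ⟨i, rfl⟩
        exact ⟨i, (e i).apply_symm_apply b⟩
    rw [this, card_image_of_injective]
    · simp
    · intro i i' h
      simp only at h
      have h1 : f i ((e i).symm b) = b := (e i).apply_symm_apply b
      have h2 : f i' ((e i).symm b) = b := by rw [h]; exact (e i').apply_symm_apply b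
      exact fdist _ i i' (h1.trans h2.symm)


lemma half_bern (pe : ℝ≥0∞) (hpe : pe ≤ 1) : (2:ℝ≥0∞)⁻¹ * pe + (1 - pe) = 1 - pe / 2 := by
  have hpet : pe ≠ ⊤ := (lt_of_le_of_lt hpe one_lt_top).ne
  have h2 : pe / 2 ≤ 1 := le_trans (ENNReal.half_le_self) hpe
  have hc : pe / 2 ≠ ⊤ := by
    simp only [ENNReal.div_eq_inv_mul]
    exact ENNReal.mul_ne_top (by simp) hpet
  have key : ((2:ℝ≥0∞)⁻¹ * pe + (1 - pe)) + pe / 2 = (1 - pe / 2) + pe / 2 := by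
    rw [tsub_add_cancel_of_le h2]
    have : (2:ℝ≥0∞)⁻¹ * pe = pe / 2 := by rw [ENNReal.div_eq_inv_mul]
    rw [this, add_assoc, add_comm (1 - pe) (pe/2), ← add_assoc, ENNReal.add_halves,
      add_comm, tsub_add_cancel_of_le hpe]
  exact (ENNReal.add_left_inj hc).mp key

lemma chernoff (n : ℕ) (pe : NNReal) (hpe : pe ≤ 1) (I : Finset (Fin n × Fin n)) (c : ℕ) :
    (Measure.pi fun _ : Fin n × Fin n => (PMF.bernoulli pe hpe).toMeasure)
      {E : Fin n × Fin n → Bool | #(I.filter fun q => E q = true) ≤ c}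
      ≤ 2 ^ c * (1 - (pe : ℝ≥0∞) / 2) ^ I.card := by
  classical
  have hpe' : (pe : ℝ≥0∞) ≤ 1 := by exact_mod_cast hpe
  set ν := (PMF.bernoulli pe hpe).toMeasure with hν
  set μ := Measure.pi fun _ : Fin n × Fin n => ν with hμ
  have hpet : (pe : ℝ≥0∞) ≠ ⊤ := ENNReal.coe_ne_top
  set Y : (Fin n × Fin n → Bool) → ℝ≥0∞ :=
    fun E => ∏ q ∈ I, (if E q then (2 : ℝ≥0∞)⁻¹ else 1) with hY
  have hsub : {E : Fin n × Fin n → Bool | #(I.filter fun q => E q = true) ≤ c}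
      ⊆ {E | (2 : ℝ≥0∞)⁻¹ ^ c ≤ Y E} := by
    intro E hE
    simp only [Set.mem_setOf_eq] at hE ⊢
    have hYE : Y E = (2 : ℝ≥0∞)⁻¹ ^ (#(I.filter fun q => E q = true)) := by
      simp only [hY]
      rw [← Finset.prod_filter_mul_prod_filter_not I (fun q => E q = true)]
      have h1 : ∀ q ∈ I.filter (fun q => E q = true), (if E q then (2:ℝ≥0∞)⁻¹ else 1) = 2⁻¹ := by
        intro q hq; simp only [mem_filter] at hq; simp [hq.2]
      have h2 : ∀ q ∈ I.filter (fun q => ¬(E q = true)), (if E q then (2:ℝ≥0∞)⁻¹ else 1) = 1 := by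
        intro q hq; simp only [mem_filter] at hq; simp [hq.2]
      rw [Finset.prod_congr rfl h1, Finset.prod_congr rfl h2, Finset.prod_const,
        Finset.prod_const, one_pow, mul_one]
    rw [hYE]
    exact pow_le_pow_of_le_one zero_le (by simp) hE
  have hYm : Measurable Y := Measurable.of_discrete
  have hmarkov := meas_ge_le_lintegral_div (μ := μ) hYm.aemeasurable
    (ε := (2 : ℝ≥0∞)⁻¹ ^ c) (pow_ne_zero _ (by simp)) (by simp)
  have hsingle : ∀ E : Fin n × Fin n → Bool, μ {E} = ∏ q : Fin n × Fin n, ν {E q} := by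
    intro E
    have : ({E} : Set (Fin n × Fin n → Bool)) = Set.pi Set.univ (fun q => {E q}) := by
      ext g
      simp [Set.mem_pi, funext_iff]
    rw [this, hμ, Measure.pi_pi]
  have hbern_t : ν {true} = pe := by
    rw [hν, PMF.toMeasure_apply_singleton _ _ (measurableSet_singleton _), PMF.bernoulli_apply]
    rfl
  have hbern_f : ν {false} = 1 - pe := by
    rw [hν, PMF.toMeasure_apply_singleton _ _ (measurableSet_singleton _), PMF.bernoulli_apply]
    rfl
  have hint : ∫⁻ E, Y E ∂μ = (1 - pe / 2) ^ I.card := by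
    rw [lintegral_fintype]
    have hterm : ∀ E : Fin n × Fin n → Bool, Y E * μ {E}
        = ∏ q : Fin n × Fin n,
            ((if q ∈ I then (if E q then (2:ℝ≥0∞)⁻¹ else 1) else 1) * ν {E q}) := by
      intro E
      rw [Finset.prod_mul_distrib, hsingle E]
      simp only [hY]
      rw [Finset.prod_ite_mem univ I (fun q => if E q = true then (2:ℝ≥0∞)⁻¹ else 1), univ_inter]
    simp_rw [hterm]
    rw [← Fintype.prod_sum
      (fun (q : Fin n × Fin n) (b : Bool) =>
        (if q ∈ I then (if b then (2:ℝ≥0∞)⁻¹ else 1) else 1) * ν {b})]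
    have hcoord : ∀ q : Fin n × Fin n,
        (∑ b : Bool, (if q ∈ I then (if b then (2:ℝ≥0∞)⁻¹ else 1) else 1) * ν {b})
        = if q ∈ I then (1 - (pe : ℝ≥0∞) / 2) else 1 := by
      intro q
      by_cases hq : q ∈ I <;> simp only [hq, if_true, if_false]
      · rw [Fintype.sum_bool]
        simp only [if_true, if_false, Bool.cond_true]
        rw [hbern_t, hbern_f]
        simpa using half_bern pe hpe'
      · rw [Fintype.sum_bool]
        rw [hbern_t, hbern_f, one_mul, one_mul, add_comm]
        exact tsub_add_cancel_of_le hpe'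
    rw [Finset.prod_congr rfl (fun q _ => hcoord q),
      Finset.prod_ite_mem univ I (fun _ => (1 - (pe : ℝ≥0∞)/2)), univ_inter, Finset.prod_const]
  calc μ {E : Fin n × Fin n → Bool | #(I.filter fun q => E q = true) ≤ c}
      ≤ μ {E | (2 : ℝ≥0∞)⁻¹ ^ c ≤ Y E} := measure_mono hsub
    _ ≤ (∫⁻ E, Y E ∂μ) / (2 : ℝ≥0∞)⁻¹ ^ c := hmarkov
    _ = 2 ^ c * (1 - pe / 2) ^ I.card := by
        rw [hint, ENNReal.div_eq_inv_mul, ← ENNReal.inv_pow, inv_inv]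


noncomputable section

def qq (n : ℕ) : ℝ := 32 * Real.sqrt (Real.log n / n)
def LL (n : ℕ) : ℝ := Real.sqrt n * Real.sqrt (Real.log n)
def kk (n : ℕ) : ℕ := ⌈2 * Real.sqrt (n * Real.log n)⌉₊
def rr (n : ℕ) : ℕ := ⌈Real.sqrt n⌉₊

lemma hnR {n : ℕ} (hn : 2^24 ≤ n) : (16777216:ℝ) ≤ n := by
  have hn' : 16777216 ≤ n := by norm_num at hn ⊢; omega
  exact_mod_cast hn'

lemma hsn2048 {n : ℕ} (hn : 2^24 ≤ n) : 2048 ≤ Real.sqrt n := by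
  rw [show (2048:ℝ) = Real.sqrt (2048^2) by rw [Real.sqrt_sq] <;> norm_num]
  apply Real.sqrt_le_sqrt
  have := hnR hn
  norm_num
  linarith

lemma hln1 {n : ℕ} (hn : 2^24 ≤ n) : 1 ≤ Real.log n := by
  have h3 : (3:ℝ) ≤ n := by have := hnR hn; linarith
  have he : Real.exp 1 ≤ 3 := by
    have := Real.exp_one_lt_d9
    linarith
  rw [show (1:ℝ) = Real.log (Real.exp 1) by rw [Real.log_exp]]
  exact Real.log_le_log (Real.exp_pos 1) (he.trans h3)

lemma hn_pos {n : ℕ} (hn : 2^24 ≤ n) : (0:ℝ) < n := by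
  have := hnR hn; linarith

lemma hln_le {n : ℕ} (hn : 2^24 ≤ n) : Real.log n ≤ 2 * Real.sqrt n := by
  have h0 : (0:ℝ) < n := hn_pos hn
  have hs : 0 < Real.sqrt n := Real.sqrt_pos.mpr h0
  have h1 : Real.log (Real.sqrt n) ≤ Real.sqrt n - 1 := Real.log_le_sub_one_of_pos hs
  have h2 : Real.log (Real.sqrt n) = Real.log n / 2 := Real.log_sqrt (le_of_lt h0)
  linarith

lemma hq0 (n : ℕ) : 0 ≤ qq n := by
  unfold qq; positivity

lemma hq1 {n : ℕ} (hn : 2^24 ≤ n) : qq n ≤ 1 := by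
  have h0 : (0:ℝ) < n := hn_pos hn
  have hl1 := hln1 hn
  have hsq : Real.sqrt (Real.log n / n) ^ 2 = Real.log n / n :=
    Real.sq_sqrt (by positivity)
  have hq2 : qq n ^ 2 = 1024 * (Real.log n / n) := by
    unfold qq; rw [mul_pow, hsq]; norm_num
  have hle : 1024 * Real.log n ≤ n := by
    have h1 := hln_le hn
    have h2 := hsn2048 hn
    have h3 : Real.sqrt n * Real.sqrt n = n := Real.mul_self_sqrt (le_of_lt h0)
    nlinarith
  have hq2' : qq n ^ 2 ≤ 1 := by
    rw [hq2, show 1024 * (Real.log n / n) = (1024 * Real.log n)/(n:ℝ) by ring]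
    exact (div_le_one h0).mpr hle
  nlinarith [hq0 n]

lemma hqn {n : ℕ} (hn : 2^24 ≤ n) : qq n * n = 32 * LL n := by
  have h0 : (0:ℝ) < n := hn_pos hn
  have hs : 0 < Real.sqrt n := Real.sqrt_pos.mpr h0
  have hsn' : Real.sqrt n * Real.sqrt n = n := Real.mul_self_sqrt (le_of_lt h0)
  unfold qq LL
  rw [Real.sqrt_div (Real.log_nonneg (by have := hnR hn; linarith)) n]
  field_simp
  nlinarith [hsn', Real.sqrt_nonneg (Real.log n)]

lemma hL_ge_sn {n : ℕ} (hn : 2^24 ≤ n) : Real.sqrt n ≤ LL n := by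
  have h2 := hln1 hn
  have : 1 ≤ Real.sqrt (Real.log n) := by
    rw [show (1:ℝ) = Real.sqrt 1 by simp]
    exact Real.sqrt_le_sqrt h2
  unfold LL
  nlinarith [Real.sqrt_nonneg (n:ℝ)]

lemma hL1 {n : ℕ} (hn : 2^24 ≤ n) : 1 ≤ LL n := by
  have := hL_ge_sn hn
  have := hsn2048 hn
  linarith

lemma hkR {n : ℕ} (hn : 2^24 ≤ n) : (kk n : ℝ) ≤ 3 * LL n := by
  have h0 : (0:ℝ) < n := hn_pos hn
  have hm : Real.sqrt (n * Real.log n) = LL n := by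
    unfold LL
    exact Real.sqrt_mul (le_of_lt h0) _
  have h1 : (kk n : ℝ) < 2 * Real.sqrt (n * Real.log n) + 1 := by
    exact Nat.ceil_lt_add_one (by positivity)
  rw [hm] at h1
  have := hL1 hn
  linarith

lemma hrR {n : ℕ} (hn : 2^24 ≤ n) : (rr n : ℝ) ≤ 2 * LL n := by
  have h1 : (rr n : ℝ) < Real.sqrt n + 1 := Nat.ceil_lt_add_one (Real.sqrt_nonneg _)
  have h2 := hL_ge_sn hn
  have h3 := hL1 hn
  linarith

lemma hr_ge {n : ℕ} : Real.sqrt n ≤ (rr n : ℝ) := Nat.le_ceil _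

lemma pow2_le_exp (d : ℕ) : (2:ℝ)^d ≤ Real.exp d := by
  calc (2:ℝ)^d ≤ (Real.exp 1)^d := by
        apply pow_le_pow_left₀ (by norm_num)
        have := Real.add_one_le_exp (1:ℝ)
        linarith
    _ = Real.exp d := by
        rw [← Real.exp_nat_mul]; norm_num

lemma F5 {n : ℕ} (hn : 2^24 ≤ n) :
    (2:ℝ)^(kk n + rr n) * Real.exp (-(qq n * n)/2) ≤ Real.exp (-Real.sqrt n) := by
  have h1 : ((kk n + rr n : ℕ) : ℝ) ≤ 5 * LL n := by
    push_cast
    have := hkR hn; have := hrR hn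
    linarith
  calc (2:ℝ)^(kk n + rr n) * Real.exp (-(qq n * n)/2)
      ≤ Real.exp ((kk n + rr n : ℕ)) * Real.exp (-(qq n * n)/2) := by
        apply mul_le_mul_of_nonneg_right (pow2_le_exp _) (le_of_lt (Real.exp_pos _))
    _ = Real.exp (((kk n + rr n : ℕ) : ℝ) - (qq n * n)/2) := by
        rw [← Real.exp_add]; ring_nf
    _ ≤ Real.exp (-Real.sqrt n) := by
        apply Real.exp_le_exp.mpr
        rw [hqn hn]
        have := hL_ge_sn hn
        linarith

lemma F6 {n : ℕ} (hn : 2^24 ≤ n) (s t : ℕ) (hs : rr n ≤ s) (ht : rr n ≤ t)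
    (hst : n + 1 ≤ s + t) (hsn : s ≤ n) (htn : t ≤ n) :
    (2:ℝ)^(kk n * min s t) * Real.exp (-(qq n * (s*t))/2) ≤ Real.exp (-(2:ℝ) * n) := by
  have h0 : (0:ℝ) < n := hn_pos hn
  set m : ℕ := min s t with hm
  have hmr : (Real.sqrt n : ℝ) ≤ m := by
    refine le_trans hr_ge ?_
    exact_mod_cast le_min hs ht
  have hstR : (n:ℝ) + 1 ≤ (s:ℝ) + t := by exact_mod_cast hst
  have hprod : (m:ℝ) * (n/2) ≤ (s:ℝ) * t := by
    rcases min_le_iff.mp (le_refl m) with _ | _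
    all_goals {
      rcases le_total s t with hle | hle
      · have hmeq : m = s := by omega
        have htR : (n:ℝ)/2 ≤ t := by
          have : (s:ℝ) ≤ t := by exact_mod_cast hle
          linarith
        rw [hmeq]
        have hs0 : (0:ℝ) ≤ s := by positivity
        nlinarith
      · have hmeq : m = t := by omega
        have hsR : (n:ℝ)/2 ≤ s := by
          have : (t:ℝ) ≤ s := by exact_mod_cast hle
          linarith
        rw [hmeq]
        have ht0 : (0:ℝ) ≤ t := by positivity
        nlinarith }
  have hkm : ((kk n * m : ℕ) : ℝ) ≤ 3 * LL n * m := by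
    push_cast
    have := hkR hn
    have hm0 : (0:ℝ) ≤ m := by positivity
    nlinarith
  have hq_st : 8 * LL n * m ≤ qq n * ((s:ℝ)*t) / 2 := by
    have hq0' := hq0 n
    have h32 : qq n * n = 32 * LL n := hqn hn
    have : qq n * ((m:ℝ) * (n/2)) ≤ qq n * ((s:ℝ)*t) := by
      apply mul_le_mul_of_nonneg_left hprod hq0'
    have heq : qq n * ((m:ℝ) * (n/2)) = 16 * LL n * m := by
      have : qq n * (m * (n/2)) = (qq n * n) * m / 2 := by ring
      rw [this, h32]; ring
    linarith
  calc (2:ℝ)^(kk n * m) * Real.exp (-(qq n * (s*t))/2)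
      ≤ Real.exp ((kk n * m : ℕ)) * Real.exp (-(qq n * ((s:ℝ)*t))/2) := by
        apply mul_le_mul_of_nonneg_right (pow2_le_exp _) (le_of_lt (Real.exp_pos _))
    _ = Real.exp (((kk n * m : ℕ):ℝ) - qq n * ((s:ℝ)*t)/2) := by
        rw [← Real.exp_add]; ring_nf
    _ ≤ Real.exp (-(2:ℝ) * n) := by
        apply Real.exp_le_exp.mpr
        have hL1' := hL1 hn
        have hsn' : Real.sqrt n * Real.sqrt n = n := Real.mul_self_sqrt (le_of_lt h0)
        have hLsn := hL_ge_sn hn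
        have hsn0 : (0:ℝ) ≤ Real.sqrt n := Real.sqrt_nonneg _
        have h5 : 5 * ((n:ℝ)) ≤ 5 * LL n * m := by nlinarith
        nlinarith

-- tail bounds
lemma tail1 {n : ℕ} (hn : 1 ≤ n) :
    2 * (n:ℝ) * Real.exp (-Real.sqrt n) ≤ 6250 / n := by
  have h0 : (0:ℝ) < n := by exact_mod_cast hn
  have h1 : (1:ℝ) ≤ n := by exact_mod_cast hn
  have hs : 0 < Real.sqrt n := Real.sqrt_pos.mpr h0
  have hs1 : 1 ≤ Real.sqrt n := by
    rw [show (1:ℝ) = Real.sqrt 1 by simp]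
    exact Real.sqrt_le_sqrt h1
  have hexp : (Real.sqrt n / 5)^5 ≤ Real.exp (Real.sqrt n) := by
    have h1' : Real.sqrt n / 5 ≤ Real.exp (Real.sqrt n / 5) := by
      have := Real.add_one_le_exp (Real.sqrt n / 5)
      linarith
    have h2 : (Real.sqrt n / 5)^5 ≤ (Real.exp (Real.sqrt n / 5))^5 :=
      pow_le_pow_left₀ (by positivity) h1' 5
    have h3 : (Real.exp (Real.sqrt n / 5))^5 = Real.exp (Real.sqrt n) := by
      rw [← Real.exp_nat_mul]
      norm_num
      ring_nf
    linarith
  have e2 : Real.sqrt n ^ 2 = n := Real.sq_sqrt (le_of_lt h0)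
  have e5 : (Real.sqrt n)^5 = (n:ℝ)^2 * Real.sqrt n := by
    rw [show 5 = 2*2+1 by norm_num, pow_succ, pow_mul, e2]
  have key : 2 * (n:ℝ) * n ≤ 6250 * Real.exp (Real.sqrt n) := by
    have h4 : 6250 * ((Real.sqrt n / 5)^5) = 2 * (n:ℝ)^2 * Real.sqrt n := by
      rw [div_pow, e5]; ring
    nlinarith
  rw [Real.exp_neg, show 2*(n:ℝ)*(Real.exp (Real.sqrt n))⁻¹
      = (2*(n:ℝ))/Real.exp (Real.sqrt n) by ring,
    div_le_div_iff₀ (Real.exp_pos _) h0]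
  nlinarith [key]

end


-- === bridge ===

lemma chernoff_real (n : ℕ) (x : ℝ) (hx0 : 0 ≤ x) (hx1 : x ≤ 1)
    (I : Finset (Fin n × Fin n)) (c : ℕ) :
    (Measure.pi fun _ : Fin n × Fin n =>
        (PMF.bernoulli (min 1 (Real.toNNReal x)) (min_le_left _ _)).toMeasure)
      {E : Fin n × Fin n → Bool | #(I.filter fun q => E q = true) ≤ c}
      ≤ ENNReal.ofReal ((2:ℝ)^c * Real.exp (-(x * I.card)/2)) := by
  refine (chernoff n _ (min_le_left _ _) I c).trans ?_
  have hmin : min 1 (Real.toNNReal x) = Real.toNNReal x :=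
    min_eq_right (by rw [← Real.toNNReal_one]; exact Real.toNNReal_le_toNNReal hx1)
  rw [hmin]
  change (2:ℝ≥0∞)^c * (1 - ENNReal.ofReal x / 2)^I.card ≤ _
  have h1 : ENNReal.ofReal (1 - x/2) = 1 - ENNReal.ofReal x / 2 := by
    rw [ENNReal.ofReal_sub _ (by positivity : (0:ℝ) ≤ x/2), ENNReal.ofReal_one,
      ENNReal.ofReal_div_of_pos (by norm_num : (0:ℝ) < 2)]
    norm_num
  rw [← h1, ← ENNReal.ofReal_pow (by linarith),
    show (2:ℝ≥0∞) = ENNReal.ofReal 2 by norm_num,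
    ← ENNReal.ofReal_pow (by norm_num : (0:ℝ) ≤ 2),
    ← ENNReal.ofReal_mul (by positivity)]
  apply ENNReal.ofReal_le_ofReal
  have hstep : (1 - x/2)^I.card ≤ Real.exp (-(x * I.card)/2) := by
    calc (1 - x/2)^I.card ≤ (Real.exp (-x/2))^I.card := by
          apply pow_le_pow_left₀ (by linarith)
          have := Real.add_one_le_exp (-x/2)
          linarith
      _ = Real.exp (-(x * I.card)/2) := by
          rw [← Real.exp_nat_mul]
          congr 1
          ring
  have h2c : (0:ℝ) ≤ 2^c := by positivity
  nlinarith [pow_nonneg (by linarith : (0:ℝ) ≤ 1 - x/2) I.card]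

lemma cor_row {n : ℕ} (hn : 2^24 ≤ n) (a : Fin n) :
    (Measure.pi fun _ : Fin n × Fin n =>
        (PMF.bernoulli (min 1 (Real.toNNReal (qq n))) (min_le_left _ _)).toMeasure)
      {E : Fin n × Fin n → Bool |
        #(univ.filter fun b => E (a, b) = true) ≤ kk n + rr n}
      ≤ ENNReal.ofReal (Real.exp (-Real.sqrt n)) := by
  classical
  set emb : Fin n ↪ Fin n × Fin n :=
    ⟨fun b => (a, b), fun b b' h => (Prod.ext_iff.mp h).2⟩ with hemb
  have hset : {E : Fin n × Fin n → Bool |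
        #(univ.filter fun b => E (a, b) = true) ≤ kk n + rr n}
      = {E : Fin n × Fin n → Bool |
        #((univ.map emb).filter fun q => E q = true) ≤ kk n + rr n} := by
    ext E
    simp only [Set.mem_setOf_eq, Finset.filter_map, Finset.card_map]
    rfl
  rw [hset]
  refine (chernoff_real n (qq n) (hq0 n) (hq1 hn) _ _).trans ?_
  apply ENNReal.ofReal_le_ofReal
  have hIc : (univ.map emb).card = n := by simp
  rw [hIc]
  exact F5 hn

lemma cor_col {n : ℕ} (hn : 2^24 ≤ n) (b : Fin n) :
    (Measure.pi fun _ : Fin n × Fin n =>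
        (PMF.bernoulli (min 1 (Real.toNNReal (qq n))) (min_le_left _ _)).toMeasure)
      {E : Fin n × Fin n → Bool |
        #(univ.filter fun a => E (a, b) = true) ≤ kk n + rr n}
      ≤ ENNReal.ofReal (Real.exp (-Real.sqrt n)) := by
  classical
  set emb : Fin n ↪ Fin n × Fin n :=
    ⟨fun a => (a, b), fun a a' h => (Prod.ext_iff.mp h).1⟩ with hemb
  have hset : {E : Fin n × Fin n → Bool |
        #(univ.filter fun a => E (a, b) = true) ≤ kk n + rr n}
      = {E : Fin n × Fin n → Bool |
        #((univ.map emb).filter fun q => E q = true) ≤ kk n + rr n} := by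
    ext E
    simp only [Set.mem_setOf_eq, Finset.filter_map, Finset.card_map]
    rfl
  rw [hset]
  refine (chernoff_real n (qq n) (hq0 n) (hq1 hn) _ _).trans ?_
  apply ENNReal.ofReal_le_ofReal
  have hIc : (univ.map emb).card = n := by simp
  rw [hIc]
  exact F5 hn

lemma cor_pair {n : ℕ} (hn : 2^24 ≤ n) (S T : Finset (Fin n))
    (h1 : n + 1 ≤ #S + #T) (h2 : rr n ≤ #S) (h3 : rr n ≤ #T) :
    (Measure.pi fun _ : Fin n × Fin n =>
        (PMF.bernoulli (min 1 (Real.toNNReal (qq n))) (min_le_left _ _)).toMeasure)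
      {E : Fin n × Fin n → Bool |
        #((S ×ˢ T).filter fun q => E q = true) ≤ kk n * min #S #T}
      ≤ ENNReal.ofReal (Real.exp (-(2:ℝ) * n)) := by
  refine (chernoff_real n (qq n) (hq0 n) (hq1 hn) _ _).trans ?_
  apply ENNReal.ofReal_le_ofReal
  have hc : (S ×ˢ T).card = #S * #T := Finset.card_product S T
  rw [hc]
  have hsn : #S ≤ n := by
    have := card_le_card (subset_univ S); simpa using this
  have htn : #T ≤ n := by
    have := card_le_card (subset_univ T); simpa using this
  have := F6 hn #S #T h2 h3 h1 hsn htn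
  have hcast : ((#S * #T : ℕ) : ℝ) = (#S : ℝ) * (#T : ℝ) := by push_cast; ring
  rw [hcast]
  exact this

lemma ratio_lt_one : 4 * Real.exp (-2) < 1 := by
  have h1 : (2:ℝ) < Real.exp 1 := by
    have := Real.add_one_lt_exp (by norm_num : (1:ℝ) ≠ 0)
    linarith
  have h2 : (4:ℝ) < Real.exp 2 := by
    have : Real.exp 2 = Real.exp 1 * Real.exp 1 := by
      rw [← Real.exp_add]; norm_num
    nlinarith
  have h3 : Real.exp (-2) = (Real.exp 2)⁻¹ := Real.exp_neg 2
  have h4 : (0:ℝ) < Real.exp 2 := Real.exp_pos 2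
  rw [h3]
  rw [mul_inv_lt_iff₀ h4]
  linarith

noncomputable def bb (n : ℕ) : ℝ := 6250 / n + (4 * Real.exp (-2))^n

lemma bb_tendsto : Filter.Tendsto bb Filter.atTop (nhds 0) := by
  have h1 : Filter.Tendsto (fun n : ℕ => 6250 / (n:ℝ)) Filter.atTop (nhds 0) :=
    tendsto_const_div_atTop_nhds_zero_nat 6250
  have h2 : Filter.Tendsto (fun n : ℕ => (4 * Real.exp (-2))^n) Filter.atTop (nhds 0) :=
    tendsto_pow_atTop_nhds_zero_of_lt_one (by positivity) ratio_lt_one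
  have := h1.add h2
  exact (by simpa using this :
    Filter.Tendsto (fun n : ℕ => 6250 / (n:ℝ) + (4 * Real.exp (-2))^n) Filter.atTop (nhds 0))

lemma bb_nonneg (n : ℕ) : 0 ≤ bb n := by
  unfold bb; positivity

end Stmt17Aux
open Stmt17Aux


/-- Let `G` be a random bipartite graph with `n` vertices on each side where each edge
appears independently with probability `p = 32√(log n / n)` (truncated at `1`, which is
immaterial for large `n`). Then with high probability (probability tending to `1` as
`n → ∞`) `G` contains a `⌈2√(n log n)⌉`-regular spanning subgraph. -/
theorem stmt17 :
    Filter.Tendsto (fun n : ℕ =>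
      (Measure.pi fun _ : Fin n × Fin n =>
        (PMF.bernoulli (min 1 (Real.toNNReal (32 * Real.sqrt (Real.log n / n))))
          (min_le_left _ _)).toMeasure)
        {E : Fin n × Fin n → Bool | ∃ H : Fin n × Fin n → Bool,
          (∀ p, H p = true → E p = true) ∧
          (∀ a : Fin n, (Finset.univ.filter fun b => H (a, b) = true).card
              = ⌈2 * Real.sqrt (n * Real.log n)⌉₊) ∧
          (∀ b : Fin n, (Finset.univ.filter fun a => H (a, b) = true).card
              = ⌈2 * Real.sqrt (n * Real.log n)⌉₊)})
      Filter.atTop (nhds 1) := by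
  classical
  set μ : (n : ℕ) → Measure (Fin n × Fin n → Bool) := fun n =>
    Measure.pi fun _ : Fin n × Fin n =>
      (PMF.bernoulli (min 1 (Real.toNNReal (32 * Real.sqrt (Real.log n / n))))
        (min_le_left _ _)).toMeasure with hμ
  set A : (n : ℕ) → Set (Fin n × Fin n → Bool) := fun n =>
    {E : Fin n × Fin n → Bool | ∃ H : Fin n × Fin n → Bool,
      (∀ p, H p = true → E p = true) ∧
      (∀ a : Fin n, (Finset.univ.filter fun b => H (a, b) = true).card
          = ⌈2 * Real.sqrt (n * Real.log n)⌉₊) ∧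
      (∀ b : Fin n, (Finset.univ.filter fun a => H (a, b) = true).card
          = ⌈2 * Real.sqrt (n * Real.log n)⌉₊)} with hA
  have hprob : ∀ n, IsProbabilityMeasure (μ n) := fun n => by
    rw [hμ]; infer_instance
  have hupper : ∀ n : ℕ, μ n (A n) ≤ 1 := fun n => by
    haveI := hprob n; exact prob_le_one
  have hlower : ∀ n : ℕ, 2^24 ≤ n → 1 - ENNReal.ofReal (bb n) ≤ μ n (A n) := by
    intro n hn
    haveI := hprob n
    set k := kk n with hk
    set r := rr n with hr
    -- bad events
    set Brow : Fin n → Set (Fin n × Fin n → Bool) := fun a =>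
      {E | #(univ.filter fun b => E (a, b) = true) ≤ k + r} with hBrow
    set Bcol : Fin n → Set (Fin n × Fin n → Bool) := fun b =>
      {E | #(univ.filter fun a => E (a, b) = true) ≤ k + r} with hBcol
    set Bpair : Finset (Fin n) × Finset (Fin n) → Set (Fin n × Fin n → Bool) := fun ST =>
      {E | (n + 1 ≤ #ST.1 + #ST.2 ∧ r ≤ #ST.1 ∧ r ≤ #ST.2) ∧
        #((ST.1 ×ˢ ST.2).filter fun q => E q = true) ≤ k * min #ST.1 #ST.2} with hBpair
    set bad : Set (Fin n × Fin n → Bool) :=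
      (⋃ a, Brow a) ∪ (⋃ b, Bcol b) ∪ (⋃ ST, Bpair ST) with hbad
    have hgoodsub : badᶜ ⊆ A n := by
      intro E hE
      rw [hbad] at hE
      simp only [Set.mem_compl_iff, Set.mem_union, not_or, Set.mem_iUnion, not_exists] at hE
      obtain ⟨⟨hrow, hcol⟩, hpair⟩ := hE
      have Hrow : ∀ a : Fin n, k + r ≤ #(univ.filter fun b => E (a, b) = true) := by
        intro a
        have := hrow a
        simp only [hBrow, Set.mem_setOf_eq, not_le] at this
        omega
      have Hcol : ∀ b : Fin n, k + r ≤ #(univ.filter fun a => E (a, b) = true) := by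
        intro b
        have := hcol b
        simp only [hBcol, Set.mem_setOf_eq, not_le] at this
        omega
      have H2 : ∀ S T : Finset (Fin n), n + 1 ≤ #S + #T → r ≤ #S → r ≤ #T →
          k * min #S #T < #((S ×ˢ T).filter fun q => E q = true) := by
        intro S T h1 h2 h3
        have := hpair (S, T)
        simp only [hBpair, Set.mem_setOf_eq, not_and, not_le] at this
        exact this ⟨h1, h2, h3⟩
      obtain ⟨H, hH1, hH2, hH3⟩ := det_main k r E Hrow Hcol H2
      exact ⟨H, hH1, hH2, hH3⟩
    -- measure of bad
    have hBrowm : μ n (⋃ a, Brow a) ≤ (n : ℝ≥0∞) * ENNReal.ofReal (Real.exp (-Real.sqrt n)) := by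
      refine (measure_iUnion_fintype_le _ _).trans ?_
      calc ∑ a, μ n (Brow a) ≤ ∑ _a : Fin n, ENNReal.ofReal (Real.exp (-Real.sqrt n)) :=
            Finset.sum_le_sum (fun a _ => cor_row hn a)
        _ = (n : ℝ≥0∞) * ENNReal.ofReal (Real.exp (-Real.sqrt n)) := by
            rw [Finset.sum_const, Finset.card_univ, Fintype.card_fin, nsmul_eq_mul]
    have hBcolm : μ n (⋃ b, Bcol b) ≤ (n : ℝ≥0∞) * ENNReal.ofReal (Real.exp (-Real.sqrt n)) := by
      refine (measure_iUnion_fintype_le _ _).trans ?_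
      calc ∑ b, μ n (Bcol b) ≤ ∑ _b : Fin n, ENNReal.ofReal (Real.exp (-Real.sqrt n)) :=
            Finset.sum_le_sum (fun b _ => cor_col hn b)
        _ = (n : ℝ≥0∞) * ENNReal.ofReal (Real.exp (-Real.sqrt n)) := by
            rw [Finset.sum_const, Finset.card_univ, Fintype.card_fin, nsmul_eq_mul]
    have hBpairm : μ n (⋃ ST, Bpair ST)
        ≤ ((2^n * 2^n : ℕ) : ℝ≥0∞) * ENNReal.ofReal (Real.exp (-(2:ℝ) * n)) := by
      refine (measure_iUnion_fintype_le _ _).trans ?_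
      have hone : ∀ ST : Finset (Fin n) × Finset (Fin n),
          μ n (Bpair ST) ≤ ENNReal.ofReal (Real.exp (-(2:ℝ) * n)) := by
        intro ST
        by_cases hc : n + 1 ≤ #ST.1 + #ST.2 ∧ r ≤ #ST.1 ∧ r ≤ #ST.2
        · have heq : Bpair ST = {E : Fin n × Fin n → Bool |
              #((ST.1 ×ˢ ST.2).filter fun q => E q = true) ≤ k * min #ST.1 #ST.2} := by
            ext E
            simp only [hBpair, Set.mem_setOf_eq, hc, true_and]
          rw [heq]
          exact cor_pair hn ST.1 ST.2 hc.1 hc.2.1 hc.2.2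
        · have heq : Bpair ST = ∅ := by
            ext E
            simp only [hBpair, Set.mem_setOf_eq, Set.mem_empty_iff_false, iff_false]
            exact fun h => hc h.1
          rw [heq]
          simp
      calc ∑ ST, μ n (Bpair ST)
          ≤ ∑ _ST : Finset (Fin n) × Finset (Fin n), ENNReal.ofReal (Real.exp (-(2:ℝ) * n)) :=
            Finset.sum_le_sum (fun ST _ => hone ST)
        _ = ((2^n * 2^n : ℕ) : ℝ≥0∞) * ENNReal.ofReal (Real.exp (-(2:ℝ) * n)) := by
            rw [Finset.sum_const, Finset.card_univ, nsmul_eq_mul]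
            congr 2
            simp [Fintype.card_prod, Fintype.card_finset]
    have hbadm : μ n bad ≤ ENNReal.ofReal (bb n) := by
      have hle1 : μ n bad ≤ (n : ℝ≥0∞) * ENNReal.ofReal (Real.exp (-Real.sqrt n))
          + (n : ℝ≥0∞) * ENNReal.ofReal (Real.exp (-Real.sqrt n))
          + ((2^n * 2^n : ℕ) : ℝ≥0∞) * ENNReal.ofReal (Real.exp (-(2:ℝ) * n)) := by
        rw [hbad]
        refine (measure_union_le _ _).trans ?_
        exact add_le_add ((measure_union_le _ _).trans (add_le_add hBrowm hBcolm)) hBpairm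
      have he1 : (n : ℝ≥0∞) * ENNReal.ofReal (Real.exp (-Real.sqrt n))
          + (n : ℝ≥0∞) * ENNReal.ofReal (Real.exp (-Real.sqrt n))
          = ENNReal.ofReal (2 * n * Real.exp (-Real.sqrt n)) := by
        rw [← two_mul, ← mul_assoc]
        rw [show ((2:ℝ≥0∞)) * (n : ℝ≥0∞) = ENNReal.ofReal (2 * n) by
          rw [ENNReal.ofReal_mul (by norm_num)]
          norm_num]
        rw [← ENNReal.ofReal_mul (by positivity)]
      have he2 : ((2^n * 2^n : ℕ) : ℝ≥0∞) * ENNReal.ofReal (Real.exp (-(2:ℝ) * n))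
          = ENNReal.ofReal ((4 * Real.exp (-2))^n) := by
        rw [← ENNReal.ofReal_natCast, ← ENNReal.ofReal_mul (by positivity)]
        congr 1
        have : ((2^n * 2^n : ℕ) : ℝ) = 4^n := by
          push_cast
          rw [← mul_pow]
          norm_num
        rw [this]
        rw [mul_pow, show Real.exp (-(2:ℝ) * n) = Real.exp (-2) ^ n by
          rw [← Real.exp_nat_mul]; congr 1; ring]
      rw [he1, he2] at hle1
      refine hle1.trans ?_
      have hn1 : 1 ≤ n := le_trans (by norm_num) hn
      have ht1 := tail1 hn1
      rw [← ENNReal.ofReal_add (by positivity) (by positivity)]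
      apply ENNReal.ofReal_le_ofReal
      unfold bb
      have : 2 * (n:ℝ) * Real.exp (-Real.sqrt n) ≤ 6250 / n := ht1
      linarith
    have hmeas : MeasurableSet bad := MeasurableSet.of_discrete
    have hcompl : μ n badᶜ = 1 - μ n bad := prob_compl_eq_one_sub hmeas
    calc 1 - ENNReal.ofReal (bb n) ≤ 1 - μ n bad := tsub_le_tsub_left hbadm 1
      _ = μ n badᶜ := hcompl.symm
      _ ≤ μ n (A n) := measure_mono hgoodsub
  -- squeeze
  have hlowtend : Filter.Tendsto (fun n : ℕ => 1 - ENNReal.ofReal (bb n))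
      Filter.atTop (nhds 1) := by
    have h0 : Filter.Tendsto (fun n : ℕ => ENNReal.ofReal (bb n)) Filter.atTop (nhds 0) := by
      have := ENNReal.tendsto_ofReal bb_tendsto
      simpa using this
    have := ENNReal.Tendsto.sub (tendsto_const_nhds (x := (1:ℝ≥0∞)) (f := Filter.atTop)) h0
      (Or.inr (by simp))
    simpa using this
  refine tendsto_of_tendsto_of_tendsto_of_le_of_le' hlowtend tendsto_const_nhds ?_ ?_
  · filter_upwards [Filter.eventually_ge_atTop (2^24)] with n hn
    exact hlower n hn
  · exact Filter.Eventually.of_forall hupper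
end
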